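/- arXiv:1501.03986 — 7 statements merged into one kernel-verified Lean document; each statement's English description precedes it below -/
import Mathlib

section
/- Let X be a perfect, compact plane set, let w ∈ X, and let f ∈ D¹(X) with f(w) = 0. Then there is a unique g ∈ D¹(X) with g(w) = 0 and g'(w) = 0 such that f(z)³ = (z − w)·g(z) for all z ∈ X. -/
open Complex Set

/-- The uniform norm of `f` on `X`. -/
noncomputable def UnifNorm (X : Set ℂ) (f : ℂ → ℂ) : ℝ :=
  sSup ((fun z => ‖f z‖) '' X)

/-- `f` is continuously differentiable on `X` with derivative `f'`
(derivative taken as a limit within `X`). -/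
def HasD1 (X : Set ℂ) (f f' : ℂ → ℂ) : Prop :=
  (∀ z ∈ X, HasDerivWithinAt f (f' z) X z) ∧ ContinuousOn f' X

/-- The `D¹`-norm `|f|_X + |f'|_X`. -/
noncomputable def DNorm (X : Set ℂ) (f f' : ℂ → ℂ) : ℝ :=
  UnifNorm X f + UnifNorm X f'

/-!
Away from `w` the quotient `g = f³ / (z - w)` is differentiable by the quotient rule. At `w`,
where `f(w) = 0`, both the difference quotient `g(z) / (z - w)` and the formula for `g'(z)` are
of the form (a convergent expression in the slope `f(z) / (z - w)` and `f'`) · `f(z)`, hence tend to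
`0`; so `g'(w) = 0` and `g'` is continuous at `w`.
-/

open Filter Topology

section CubeQuot

variable {𝕜 : Type*} [NontriviallyNormedField 𝕜] {s : Set 𝕜} {f f' : 𝕜 → 𝕜} {w z : 𝕜}

/-- The junk value of division by zero makes `cubeQuot f w w = 0`. -/
def cubeQuot (f : 𝕜 → 𝕜) (w : 𝕜) : 𝕜 → 𝕜 := fun z => f z ^ 3 / (z - w)

def cubeQuotDeriv (f f' : 𝕜 → 𝕜) (w : 𝕜) : 𝕜 → 𝕜 :=
  fun z => 3 * f z ^ 2 * f' z / (z - w) - f z ^ 3 / (z - w) ^ 2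

@[simp]
theorem cubeQuot_self : cubeQuot f w w = 0 := by
  simp [cubeQuot]

@[simp]
theorem cubeQuotDeriv_self : cubeQuotDeriv f f' w w = 0 := by
  simp [cubeQuotDeriv]

theorem sub_mul_cubeQuot (hfw : f w = 0) (z : 𝕜) : (z - w) * cubeQuot f w z = f z ^ 3 := by
  rcases eq_or_ne z w with rfl | hzw
  · simp [hfw]
  · exact mul_div_cancel₀ _ (sub_ne_zero.mpr hzw)

theorem eq_cubeQuot_of_pow_three_eq_sub_mul {g : 𝕜 → 𝕜} (hgw : g w = 0)
    (hfg : ∀ z ∈ s, f z ^ 3 = (z - w) * g z) : ∀ z ∈ s, g z = cubeQuot f w z := by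
  intro z hz
  rcases eq_or_ne z w with rfl | hzw
  · simp [hgw]
  · rw [cubeQuot, hfg z hz, mul_div_cancel_left₀ _ (sub_ne_zero.mpr hzw)]

theorem slope_cubeQuot_self (hfw : f w = 0) (hzw : z ≠ w) :
    slope (cubeQuot f w) w z = slope f w z ^ 2 * f z := by
  have : z - w ≠ 0 := sub_ne_zero.mpr hzw
  simp only [slope_def_field, cubeQuot, hfw, sub_self, div_zero, sub_zero]
  field_simp

theorem cubeQuotDeriv_eq_slope_mul (hfw : f w = 0) (hzw : z ≠ w) :
    cubeQuotDeriv f f' w z = (3 * f' z - slope f w z) * slope f w z * f z := by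
  have : z - w ≠ 0 := sub_ne_zero.mpr hzw
  simp only [slope_def_field, cubeQuotDeriv, hfw, sub_zero]
  field_simp

theorem tendsto_self_punctured_of_continuousWithinAt {g : 𝕜 → 𝕜} (hg : ContinuousWithinAt g s w) :
    Tendsto g (𝓝[s \ {w}] w) (𝓝 (g w)) :=
  hg.tendsto.mono_left (nhdsWithin_mono _ sdiff_subset)

theorem hasDerivWithinAt_cubeQuot_self (hf : HasDerivWithinAt f (f' w) s w) (hfw : f w = 0) :
    HasDerivWithinAt (cubeQuot f w) 0 s w := by
  rw [hasDerivWithinAt_iff_tendsto_slope]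
  have hslope := hasDerivWithinAt_iff_tendsto_slope.mp hf
  have hf0 := tendsto_self_punctured_of_continuousWithinAt hf.continuousWithinAt
  rw [hfw] at hf0
  have hlim := (hslope.pow 2).mul hf0
  rw [mul_zero] at hlim
  refine hlim.congr' ?_
  filter_upwards [self_mem_nhdsWithin] with z hz
  exact (slope_cubeQuot_self hfw hz.2).symm

theorem hasDerivWithinAt_cubeQuot_of_ne (hf : HasDerivWithinAt f (f' z) s z) (hzw : z ≠ w) :
    HasDerivWithinAt (cubeQuot f w) (cubeQuotDeriv f f' w z) s z := by
  have hzw' : z - w ≠ 0 := sub_ne_zero.mpr hzw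
  refine ((hf.pow 3).div ((hasDerivWithinAt_id z s).sub_const w) hzw').congr_deriv ?_
  simp only [cubeQuotDeriv, id, Pi.pow_apply]
  field_simp
  norm_num
  ring

theorem continuousWithinAt_cubeQuotDeriv_self (hf : HasDerivWithinAt f (f' w) s w)
    (hf' : ContinuousWithinAt f' s w) (hfw : f w = 0) :
    ContinuousWithinAt (cubeQuotDeriv f f' w) s w := by
  rw [← continuousWithinAt_sdiff_self, ContinuousWithinAt, cubeQuotDeriv_self]
  have hslope := hasDerivWithinAt_iff_tendsto_slope.mp hf
  have hf0 := tendsto_self_punctured_of_continuousWithinAt hf.continuousWithinAt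
  rw [hfw] at hf0
  have hf'lim := tendsto_self_punctured_of_continuousWithinAt hf'
  have hlim := (((hf'lim.const_mul 3).sub hslope).mul hslope).mul hf0
  rw [mul_zero] at hlim
  refine hlim.congr' ?_
  filter_upwards [self_mem_nhdsWithin] with z hz
  exact (cubeQuotDeriv_eq_slope_mul hfw hz.2).symm

theorem continuousWithinAt_cubeQuotDeriv_of_ne (hf : ContinuousWithinAt f s z)
    (hf' : ContinuousWithinAt f' s z) (hzw : z ≠ w) :
    ContinuousWithinAt (cubeQuotDeriv f f' w) s z := by
  have hzw' : z - w ≠ 0 := sub_ne_zero.mpr hzw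
  have hden : ContinuousWithinAt (fun y : 𝕜 => y - w) s z := by fun_prop
  exact (((continuousWithinAt_const.mul (hf.pow 2)).mul hf').div hden hzw').sub
    ((hf.pow 3).div (hden.pow 2) (pow_ne_zero 2 hzw'))

end CubeQuot

theorem HasD1.cubeQuot {X : Set ℂ} {f f' : ℂ → ℂ} {w : ℂ} (hf : HasD1 X f f') (hw : w ∈ X)
    (hfw : f w = 0) : HasD1 X (cubeQuot f w) (cubeQuotDeriv f f' w) := by
  have hfcont : ContinuousOn f X := fun z hz => (hf.1 z hz).continuousWithinAt
  refine ⟨fun z hz => ?_, fun z hz => ?_⟩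
  · rcases eq_or_ne z w with rfl | hzw
    · simpa using hasDerivWithinAt_cubeQuot_self (hf.1 z hz) hfw
    · exact hasDerivWithinAt_cubeQuot_of_ne (hf.1 z hz) hzw
  · rcases eq_or_ne z w with rfl | hzw
    · exact continuousWithinAt_cubeQuotDeriv_self (hf.1 z hz) (hf.2 z hz) hfw
    · exact continuousWithinAt_cubeQuotDeriv_of_ne (hfcont z hz) (hf.2 z hz) hzw

theorem stmt3_general (X : Set ℂ)
    (w : ℂ) (hw : w ∈ X) (f f' : ℂ → ℂ) (hf : HasD1 X f f') (hfw : f w = 0) :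
    ∃ g g' : ℂ → ℂ, HasD1 X g g' ∧ g w = 0 ∧ g' w = 0 ∧
      (∀ z ∈ X, f z ^ 3 = (z - w) * g z) ∧
      (∀ g₂ g₂' : ℂ → ℂ, HasD1 X g₂ g₂' → g₂ w = 0 → g₂' w = 0 →
        (∀ z ∈ X, f z ^ 3 = (z - w) * g₂ z) → ∀ z ∈ X, g₂ z = g z) :=
  ⟨cubeQuot f w, cubeQuotDeriv f f' w, hf.cubeQuot hw hfw, cubeQuot_self, cubeQuotDeriv_self,
    fun z _ => (sub_mul_cubeQuot hfw z).symm,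
    fun _ _ _ hg₂w _ hfg₂ => eq_cubeQuot_of_pow_three_eq_sub_mul hg₂w hfg₂⟩

/-- If `f ∈ D¹(X)` vanishes at `w ∈ X`, then there is a unique `g ∈ D¹(X)` with
`g(w) = 0` and `g'(w) = 0` such that `f(z)³ = (z − w)·g(z)` on `X`. -/
theorem stmt3 (X : Set ℂ) (hXc : IsCompact X) (hXne : X.Nonempty) (hXp : Perfect X)
    (w : ℂ) (hw : w ∈ X) (f f' : ℂ → ℂ) (hf : HasD1 X f f') (hfw : f w = 0) :
    ∃ g g' : ℂ → ℂ, HasD1 X g g' ∧ g w = 0 ∧ g' w = 0 ∧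
      (∀ z ∈ X, f z ^ 3 = (z - w) * g z) ∧
      (∀ g₂ g₂' : ℂ → ℂ, HasD1 X g₂ g₂' → g₂ w = 0 → g₂' w = 0 →
        (∀ z ∈ X, f z ^ 3 = (z - w) * g₂ z) → ∀ z ∈ X, g₂ z = g z) :=
  stmt3_general X w hw f f' hf hfw
end

section
/- Let X be a semi-rectifiable compact plane set and let ℱ be an effective family of paths in X. Then ℱ-derivatives are unique: if g₁ and g₂ are both ℱ-derivatives of f ∈ C(X), then g₁ = g₂. -/
open Complex Set

/-- A rectifiable path in `X` : a continuous map of bounded variation on `[a,b]` into `X`. -/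
structure RectPath (X : Set ℂ) where
  a : ℝ
  b : ℝ
  hab : a < b
  toFun : ℝ → ℂ
  cont : ContinuousOn toFun (Set.Icc a b)
  maps : Set.MapsTo toFun (Set.Icc a b) X
  bv : BoundedVariationOn toFun (Set.Icc a b)

/-- `I` is the Riemann–Stieltjes integral `∫_γ g(z) dz` over `γ|_{[a,b]}`:
Riemann–Stieltjes sums over tagged partitions of sufficiently small mesh approximate `I`. -/
def IsRSIntegral (γ : ℝ → ℂ) (a b : ℝ) (g : ℂ → ℂ) (I : ℂ) : Prop :=
  ∀ ε > (0:ℝ), ∃ δ > (0:ℝ), ∀ n : ℕ, ∀ t s : ℕ → ℝ,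
    t 0 = a → t n = b → (∀ i < n, t i ≤ t (i + 1)) → (∀ i < n, t (i + 1) - t i < δ) →
    (∀ i < n, s i ∈ Set.Icc (t i) (t (i + 1))) →
    ‖(∑ i ∈ Finset.range n, g (γ (s i)) * (γ (t (i + 1)) - γ (t i))) - I‖ < ε

/-- `g` is an `ℱ`-derivative of `f`. -/
def IsFDerivOf {X : Set ℂ} (F : Set (RectPath X)) (f g : ℂ → ℂ) : Prop :=
  ∀ γ ∈ F, IsRSIntegral γ.toFun γ.a γ.b g (f (γ.toFun γ.b) - f (γ.toFun γ.a))

/-- `γ` has no constant subpaths. -/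
def NoConstantSubpath {X : Set ℂ} (γ : RectPath X) : Prop :=
  ∀ c d, γ.a ≤ c → c < d → d ≤ γ.b → ∃ t ∈ Set.Icc c d, γ.toFun t ≠ γ.toFun c

/-- `η` is a subpath of `γ` : the restriction of `γ` to a non-degenerate closed
subinterval of the parameter interval of `γ`. -/
def IsSubpathOf {X : Set ℂ} (η γ : RectPath X) : Prop :=
  γ.a ≤ η.a ∧ η.b ≤ γ.b ∧ ∀ t ∈ Set.Icc η.a η.b, η.toFun t = γ.toFun t

/-- A family `F` of paths in `X` is effective: each path is admissible (rectifiable with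
no constant subpaths), `F` is closed under subpaths, and the union of the images of the
paths in `F` is dense in `X`. -/
def Effective {X : Set ℂ} (F : Set (RectPath X)) : Prop :=
  (∀ γ ∈ F, NoConstantSubpath γ) ∧
  (∀ γ ∈ F, ∀ η : RectPath X, IsSubpathOf η γ → η ∈ F) ∧
  X ⊆ closure (⋃ γ ∈ F, γ.toFun '' Set.Icc γ.a γ.b)

/-- `X` is semi-rectifiable: the union of all rectifiable Jordan arcs in `X` is dense
in `X`. -/
def SemiRectifiable (X : Set ℂ) : Prop :=
  X ⊆ closure {z | ∃ γ : RectPath X, Set.InjOn γ.toFun (Set.Icc γ.a γ.b) ∧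
    z ∈ γ.toFun '' Set.Icc γ.a γ.b}

/-! Put `h = g₁ - g₂`; its integral over every subpath of a path `γ ∈ ℱ` vanishes. If
`w = h (γ t₀) ≠ 0`, then on a short parameter interval `[c, d]` around `t₀` the integrand stays
within `‖w‖ / 2` of `w`, so for `c ≤ u < v ≤ d` the identity `0 = ∫_u^v h dγ` gives
`‖w‖ ‖γ v - γ u‖ ≤ ‖w‖ / 2 · var_[u,v] γ`. Summing over partitions, `var_[c,d] γ` is at most
half of itself, hence zero, so `γ` is constant on `[c, d]`, which admissible paths are not.
Thus `g₁ = g₂` on the union of the paths of `ℱ`, which is dense in `X`. -/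

open Topology

lemma exists_partition_Icc {a b δ : ℝ} (hab : a ≤ b) (hδ : 0 < δ) :
    ∃ n : ℕ, ∃ t : ℕ → ℝ, Monotone t ∧ (∀ i, t i ∈ Icc a b) ∧ t 0 = a ∧ t n = b ∧
      ∀ i, t (i + 1) - t i < δ := by
  obtain ⟨n, hn⟩ := exists_nat_ge ((b - a) / (δ / 2))
  refine ⟨n, fun i => min b (a + i * (δ / 2)), fun i j hij => ?_, fun i => ⟨?_, min_le_left _ _⟩,
    ?_, ?_, fun i => ?_⟩
  · dsimp only
    gcongr
  · exact le_min hab (le_add_of_nonneg_right (by positivity))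
  · simpa using hab
  · rw [div_le_iff₀ (half_pos hδ)] at hn
    exact min_eq_left (by linarith)
  · have : min b (a + (i + 1 : ℕ) * (δ / 2)) ≤ min b (a + i * (δ / 2)) + δ / 2 := by
      rw [← min_add_add_right]
      push_cast
      exact min_le_min (by linarith) (by linarith)
    linarith

theorem BoundedVariationOn.sum_dist_le {α E : Type*} [LinearOrder α] [PseudoMetricSpace E]
    {f : α → E} {s : Set α} (hf : BoundedVariationOn f s) {u : ℕ → α} (hu : Monotone u)
    (us : ∀ i, u i ∈ s) (n : ℕ) :
    ∑ i ∈ Finset.range n, dist (f (u (i + 1))) (f (u i)) ≤ (eVariationOn f s).toReal := by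
  simp only [dist_edist]
  rw [← ENNReal.toReal_sum fun _ _ => edist_ne_top _ _]
  exact ENNReal.toReal_mono hf (eVariationOn.sum_le hu us)

theorem eVariationOn_Icc_eq_zero_of_edist_le_mul {α E : Type*} [LinearOrder α]
    [PseudoEMetricSpace E] {f : α → E} {c d : α} {q : ENNReal} (hq : q < 1)
    (hf : BoundedVariationOn f (Icc c d))
    (h : ∀ u ∈ Icc c d, ∀ v ∈ Icc c d, u ≤ v → edist (f v) (f u) ≤ q * eVariationOn f (Icc u v)) :
    eVariationOn f (Icc c d) = 0 := by
  have hle : eVariationOn f (Icc c d) ≤ q * eVariationOn f (Icc c d) := by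
    refine iSup_le fun ⟨n, x, hx, hxs⟩ => ?_
    calc ∑ i ∈ Finset.range n, edist (f (x (i + 1))) (f (x i))
        ≤ ∑ i ∈ Finset.range n, q * eVariationOn f (Icc (x i) (x (i + 1))) :=
          Finset.sum_le_sum fun i _ => h _ (hxs i) _ (hxs (i + 1)) (hx i.le_succ)
      _ = q * eVariationOn f (Icc (x 0) (x n)) := by
          rw [← Finset.mul_sum, eVariationOn.sum' f hx]
      _ ≤ q * eVariationOn f (Icc c d) :=
          mul_le_mul_right (eVariationOn.mono f (Icc_subset_Icc (hxs 0).1 (hxs n).2)) _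
  by_contra h0
  exact (ENNReal.mul_lt_mul_right h0 hf hq).not_ge (by rwa [mul_one, mul_comm])

lemma exists_Icc_subset_of_mem_nhdsWithin_Icc {a b t₀ : ℝ} {s : Set ℝ} (hab : a < b)
    (ht₀ : t₀ ∈ Icc a b) (hs : s ∈ 𝓝[Icc a b] t₀) :
    ∃ c d, a ≤ c ∧ c < d ∧ d ≤ b ∧ Icc c d ⊆ s := by
  obtain ⟨ρ, hρ, hball⟩ := Metric.mem_nhdsWithin_iff.mp hs
  refine ⟨max a (t₀ - ρ / 2), min b (t₀ + ρ / 2), le_max_left _ _, ?_, min_le_left _ _,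
    fun t ht => hball ⟨?_, ?_⟩⟩
  · exact max_lt (lt_min hab (by linarith [ht₀.1])) (lt_min (by linarith [ht₀.2]) (by linarith))
  · rw [Metric.mem_ball, Real.dist_eq, abs_lt]
    constructor <;> linarith [ht.1, ht.2, le_max_right a (t₀ - ρ / 2), min_le_right b (t₀ + ρ / 2)]
  · exact ⟨le_trans (le_max_left _ _) ht.1, le_trans ht.2 (min_le_left _ _)⟩

section RiemannStieltjes

variable {γ : ℝ → ℂ} {a b : ℝ} {g g₁ g₂ : ℂ → ℂ} {I I₁ I₂ : ℂ}

theorem IsRSIntegral.sub (h₁ : IsRSIntegral γ a b g₁ I₁) (h₂ : IsRSIntegral γ a b g₂ I₂) :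
    IsRSIntegral γ a b (g₁ - g₂) (I₁ - I₂) := by
  intro ε hε
  obtain ⟨δ₁, hδ₁, H₁⟩ := h₁ (ε / 2) (half_pos hε)
  obtain ⟨δ₂, hδ₂, H₂⟩ := h₂ (ε / 2) (half_pos hε)
  refine ⟨min δ₁ δ₂, lt_min hδ₁ hδ₂, fun n t s h0 hn hmono hmesh htag => ?_⟩
  have e₁ := H₁ n t s h0 hn hmono (fun i hi => (hmesh i hi).trans_le (min_le_left _ _)) htag
  have e₂ := H₂ n t s h0 hn hmono (fun i hi => (hmesh i hi).trans_le (min_le_right _ _)) htag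
  calc _ = ‖(∑ i ∈ Finset.range n, g₁ (γ (s i)) * (γ (t (i + 1)) - γ (t i)) - I₁)
        - (∑ i ∈ Finset.range n, g₂ (γ (s i)) * (γ (t (i + 1)) - γ (t i)) - I₂)‖ := by
        simp only [Pi.sub_apply, sub_mul, Finset.sum_sub_distrib]
        ring_nf
    _ ≤ _ := norm_sub_le _ _
    _ < ε / 2 + ε / 2 := add_lt_add e₁ e₂
    _ = ε := add_halves ε

theorem IsRSIntegral.norm_mul_sub_sub_le {w : ℂ} {K : ℝ} (hab : a ≤ b)
    (hγ : BoundedVariationOn γ (Icc a b)) (hI : IsRSIntegral γ a b g I)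
    (hK : ∀ t ∈ Icc a b, ‖g (γ t) - w‖ ≤ K) :
    ‖w * (γ b - γ a) - I‖ ≤ K * (eVariationOn γ (Icc a b)).toReal := by
  have hK₀ : 0 ≤ K := (norm_nonneg _).trans (hK a ⟨le_rfl, hab⟩)
  refine le_of_forall_pos_lt_add fun ε hε => ?_
  obtain ⟨δ, hδ, hsum⟩ := hI ε hε
  obtain ⟨n, t, hmono, hmem, h0, hn, hmesh⟩ := exists_partition_Icc hab hδ
  have hRS := hsum n t t h0 hn (fun i _ => hmono i.le_succ) (fun i _ => hmesh i)
    (fun i _ => ⟨le_rfl, hmono i.le_succ⟩)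
  have hvar := hγ.sum_dist_le hmono hmem n
  simp only [dist_eq_norm] at hvar
  have htel : w * (γ b - γ a) = ∑ i ∈ Finset.range n, w * (γ (t (i + 1)) - γ (t i)) := by
    rw [← Finset.mul_sum, Finset.sum_range_sub (fun i => γ (t i)), h0, hn]
  calc ‖w * (γ b - γ a) - I‖
      = ‖∑ i ∈ Finset.range n, (w - g (γ (t i))) * (γ (t (i + 1)) - γ (t i))
          + (∑ i ∈ Finset.range n, g (γ (t i)) * (γ (t (i + 1)) - γ (t i)) - I)‖ := by
        simp only [htel, sub_mul, Finset.sum_sub_distrib]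
        ring_nf
    _ ≤ ∑ i ∈ Finset.range n, K * ‖γ (t (i + 1)) - γ (t i)‖
          + ‖∑ i ∈ Finset.range n, g (γ (t i)) * (γ (t (i + 1)) - γ (t i)) - I‖ := by
        refine (norm_add_le _ _).trans (add_le_add_left ((norm_sum_le _ _).trans ?_) _)
        refine Finset.sum_le_sum fun i _ => ?_
        rw [norm_mul, norm_sub_rev]
        exact mul_le_mul_of_nonneg_right (hK _ (hmem i)) (norm_nonneg _)
    _ < K * (eVariationOn γ (Icc a b)).toReal + ε := by
        rw [← Finset.mul_sum]
        exact add_lt_add_of_le_of_lt (mul_le_mul_of_nonneg_left hvar hK₀) hRS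

end RiemannStieltjes

theorem eq_zero_of_forall_isRSIntegral_eq_zero {γ : ℝ → ℂ} {h : ℂ → ℂ} {a b : ℝ} (hab : a < b)
    (hγ : BoundedVariationOn γ (Icc a b)) (hh : ContinuousOn (h ∘ γ) (Icc a b))
    (hnc : ∀ c d, a ≤ c → c < d → d ≤ b → ∃ t ∈ Icc c d, γ t ≠ γ c)
    (hint : ∀ u v, a ≤ u → u < v → v ≤ b → IsRSIntegral γ u v h 0) :
    ∀ t₀ ∈ Icc a b, h (γ t₀) = 0 := by
  intro t₀ ht₀
  by_contra hw
  set w := h (γ t₀)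
  have hm : 0 < ‖w‖ := norm_pos_iff.mpr hw
  obtain ⟨c, d, hac, hcd, hdb, hnear⟩ := exists_Icc_subset_of_mem_nhdsWithin_Icc hab ht₀
    ((hh t₀ ht₀).preimage_mem_nhdsWithin (Metric.closedBall_mem_nhds w (half_pos hm)))
  have hhalf : ∀ u ∈ Icc c d, ∀ v ∈ Icc c d, u ≤ v →
      edist (γ v) (γ u) ≤ 2⁻¹ * eVariationOn γ (Icc u v) := by
    intro u hu v hv huv
    rcases huv.eq_or_lt with rfl | huv
    · simp
    have hsub : Icc u v ⊆ Icc a b := Icc_subset_Icc (hac.trans hu.1) (hv.2.trans hdb)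
    have hbound := (hint u v (hac.trans hu.1) huv (hv.2.trans hdb)).norm_mul_sub_sub_le huv.le
      (hγ.mono hsub) fun t ht => by
        simpa [dist_eq_norm] using hnear (Icc_subset_Icc hu.1 hv.2 ht)
    rw [sub_zero, norm_mul] at hbound
    have hdist : ‖γ v - γ u‖ ≤ 2⁻¹ * (eVariationOn γ (Icc u v)).toReal :=
      le_of_mul_le_mul_left (by linarith) hm
    rwa [← ENNReal.toReal_le_toReal (edist_ne_top _ _)
      (ENNReal.mul_ne_top (by simp) (hγ.mono hsub)), ← dist_edist, dist_eq_norm,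
      ENNReal.toReal_mul, ENNReal.toReal_inv, ENNReal.toReal_ofNat]
  have hconst := eVariationOn_Icc_eq_zero_of_edist_le_mul (by norm_num)
    (hγ.mono (Icc_subset_Icc hac hdb)) hhalf
  obtain ⟨t, ht, hne⟩ := hnc c d hac hcd hdb
  exact hne (edist_eq_zero.mp ((eVariationOn.eq_zero_iff γ).mp hconst t ht c ⟨le_rfl, hcd.le⟩))

namespace RectPath

variable {X : Set ℂ}

def restrict (γ : RectPath X) {u v : ℝ} (hau : γ.a ≤ u) (huv : u < v) (hvb : v ≤ γ.b) :
    RectPath X where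
  a := u
  b := v
  hab := huv
  toFun := γ.toFun
  cont := γ.cont.mono (Icc_subset_Icc hau hvb)
  maps := γ.maps.mono_left (Icc_subset_Icc hau hvb)
  bv := γ.bv.mono (Icc_subset_Icc hau hvb)

theorem isSubpathOf_restrict (γ : RectPath X) {u v : ℝ} (hau : γ.a ≤ u) (huv : u < v)
    (hvb : v ≤ γ.b) : IsSubpathOf (γ.restrict hau huv hvb) γ :=
  ⟨hau, hvb, fun _ _ => rfl⟩

end RectPath

theorem IsFDerivOf.isRSIntegral_restrict {X : Set ℂ} {F : Set (RectPath X)} {f g : ℂ → ℂ}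
    (hfg : IsFDerivOf F f g) (hF : ∀ γ ∈ F, ∀ η : RectPath X, IsSubpathOf η γ → η ∈ F)
    {γ : RectPath X} (hγ : γ ∈ F) {u v : ℝ} (hau : γ.a ≤ u) (huv : u < v) (hvb : v ≤ γ.b) :
    IsRSIntegral γ.toFun u v g (f (γ.toFun v) - f (γ.toFun u)) :=
  hfg _ (hF γ hγ _ (γ.isSubpathOf_restrict hau huv hvb))

theorem stmt5_general (X : Set ℂ) (F : Set (RectPath X)) (hF : Effective F)
    (f g₁ g₂ : ℂ → ℂ)
    (hg₁ : ContinuousOn g₁ X) (hg₂ : ContinuousOn g₂ X)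
    (h1 : IsFDerivOf F f g₁) (h2 : IsFDerivOf F f g₂) :
    Set.EqOn g₁ g₂ X := by
  obtain ⟨hnc, hsub, hdense⟩ := hF
  have hpaths : EqOn g₁ g₂ (⋃ γ ∈ F, γ.toFun '' Icc γ.a γ.b) := by
    simp only [EqOn, mem_iUnion]
    rintro _ ⟨γ, hγ, t, ht, rfl⟩
    refine sub_eq_zero.mp (eq_zero_of_forall_isRSIntegral_eq_zero γ.hab γ.bv
      ((hg₁.sub hg₂).comp γ.cont γ.maps) (hnc γ hγ) (fun u v hau huv hvb => ?_) t ht)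
    simpa using (h1.isRSIntegral_restrict hsub hγ hau huv hvb).sub
      (h2.isRSIntegral_restrict hsub hγ hau huv hvb)
  exact hpaths.of_subset_closure hg₁ hg₂ (iUnion₂_subset fun γ _ => γ.maps.image_subset) hdense

/-- `ℱ`-derivatives are unique when `X` is semi-rectifiable and `ℱ` is effective. -/
theorem stmt5 (X : Set ℂ) (hXc : IsCompact X) (hXne : X.Nonempty)
    (hsr : SemiRectifiable X) (F : Set (RectPath X)) (hF : Effective F)
    (f g₁ g₂ : ℂ → ℂ) (hf : ContinuousOn f X)
    (hg₁ : ContinuousOn g₁ X) (hg₂ : ContinuousOn g₂ X)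
    (h1 : IsFDerivOf F f g₁) (h2 : IsFDerivOf F f g₂) :
    Set.EqOn g₁ g₂ X :=
  stmt5_general X F hF f g₁ g₂ hg₁ hg₂ h1 h2
end

section
/- Let X be a uniformly regular compact plane set. Then D¹(X) is a subalgebra of the Lipschitz algebra Lip(X): every f ∈ D¹(X) satisfies |f(z) − f(w)| ≤ k·|f'|_X·|z − w| for all z, w ∈ X, where k is the uniform regularity constant. -/
/-! Along a rectifiable path `γ : [a, b] → X`, let `V t` be the variation of `γ` on `[a, t]`.
For every `r > |f'|_X`, continuous induction on `[a, b]` shows `|f (γ t) - f (γ a)| ≤ r V t`: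
the set where this holds is closed since `V` is continuous along with `γ`, and near each of its
points `f` grows at most at rate `r` with respect to `|γ u - γ c| ≤ V u - V c`.
Taking `t = b` and joining `z` to `w` by a path of length at most `k |z - w|` gives the bound. -/

open Complex Set

/-- The length of a rectifiable path. -/
noncomputable def pathLength {X : Set ℂ} (γ : RectPath X) : ℝ :=
  (eVariationOn γ.toFun (Set.Icc γ.a γ.b)).toReal

/-- `γ` joins `z` to `w`. -/
def JoinsIn {X : Set ℂ} (γ : RectPath X) (z w : ℂ) : Prop :=
  γ.toFun γ.a = z ∧ γ.toFun γ.b = w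

/-- The geodesic distance in `X`. -/
noncomputable def geodDist (X : Set ℂ) (z w : ℂ) : ℝ :=
  sInf {r | ∃ γ : RectPath X, JoinsIn γ z w ∧ pathLength γ = r}

open Filter Topology

theorem LocallyBoundedVariationOn.continuousWithinAt_variationOnFromTo
    {α E : Type*} [LinearOrder α] [TopologicalSpace α] [OrderTopology α] [PseudoMetricSpace E]
    {g : α → E} {s : Set α} (hg : LocallyBoundedVariationOn g s) {a b : α} (ha : a ∈ s)
    (hb : b ∈ s) (hgb : ContinuousWithinAt g s b) :
    ContinuousWithinAt (variationOnFromTo g s a) s b := by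
  have hleft := variationOnFromTo.tendsto_left ha hb hg (hgb.mono inter_subset_left)
  have hright := variationOnFromTo.tendsto_right ha hb hg (hgb.mono inter_subset_left)
  rw [dist_self, sub_zero] at hleft
  rw [dist_self, add_zero] at hright
  rw [← continuousWithinAt_sdiff_self]
  refine (ContinuousWithinAt.union hleft hright).mono fun x ⟨hx, hxb⟩ => ?_
  rcases lt_or_gt_of_ne hxb with hlt | hgt
  exacts [Or.inl ⟨hx, hlt⟩, Or.inr ⟨hx, hgt⟩]

theorem HasDerivWithinAt.eventually_dist_le {𝕜 F : Type*} [NontriviallyNormedField 𝕜]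
    [NormedAddCommGroup F] [NormedSpace 𝕜 F] {f : 𝕜 → F} {f' : F} {s : Set 𝕜} {x : 𝕜}
    {r : ℝ} (hf : HasDerivWithinAt f f' s x) (hr : ‖f'‖ < r) :
    ∀ᶠ y in 𝓝[s] x, dist (f y) (f x) ≤ r * dist y x := by
  filter_upwards [hf.isLittleO.def (sub_pos.2 hr)] with y hy
  rw [dist_eq_norm, dist_eq_norm]
  calc ‖f y - f x‖ ≤ ‖f y - f x - (y - x) • f'‖ + ‖(y - x) • f'‖ :=
        norm_le_norm_sub_add _ _
    _ ≤ (r - ‖f'‖) * ‖y - x‖ + ‖f'‖ * ‖y - x‖ := by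
        rw [norm_smul, mul_comm ‖f'‖]
        exact add_le_add hy le_rfl
    _ = r * ‖y - x‖ := by ring

theorem ContinuousWithinAt.of_eventually_dist_le {α β : Type*} [PseudoMetricSpace α]
    [PseudoMetricSpace β] {f : α → β} {X : Set α} {z : α} {r : ℝ}
    (hf : ∀ᶠ y in 𝓝[X] z, dist (f y) (f z) ≤ r * dist y z) : ContinuousWithinAt f X z := by
  refine tendsto_iff_dist_tendsto_zero.2
    (squeeze_zero' (Eventually.of_forall fun _ => dist_nonneg) hf ?_)
  simpa using (tendsto_const_nhds (x := r)).mul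
    ((tendsto_iff_dist_tendsto_zero.1 (tendsto_nhdsWithin_of_tendsto_nhds tendsto_id)))

theorem LocallyBoundedVariationOn.dist_le_variationOnFromTo_sub {α E : Type*} [LinearOrder α]
    [PseudoMetricSpace E] {g : α → E} {s : Set α} (hg : LocallyBoundedVariationOn g s)
    {a b c : α} (ha : a ∈ s) (hb : b ∈ s) (hc : c ∈ s) (hbc : b ≤ c) :
    dist (g c) (g b) ≤ variationOnFromTo g s a c - variationOnFromTo g s a b := by
  rw [variationOnFromTo.sub_right hg ha hc hb, variationOnFromTo.eq_of_le g s hbc, dist_comm]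
  exact (hg b c hb hc).dist_le ⟨hb, le_rfl, hbc⟩ ⟨hc, hbc, le_rfl⟩

theorem dist_comp_le_mul_variationOnFromTo {α β : Type*} [PseudoMetricSpace α]
    [PseudoMetricSpace β] {X : Set α} {f : α → β} {r : ℝ} (hr : 0 ≤ r)
    (hf : ∀ z ∈ X, ∀ᶠ y in 𝓝[X] z, dist (f y) (f z) ≤ r * dist y z)
    {g : ℝ → α} {a b : ℝ} (hg : ContinuousOn g (Icc a b))
    (hbv : BoundedVariationOn g (Icc a b)) (hgX : MapsTo g (Icc a b) X) :
    ∀ t ∈ Icc a b, dist (f (g t)) (f (g a)) ≤ r * variationOnFromTo g (Icc a b) a t := by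
  set φ := variationOnFromTo g (Icc a b) a
  have hlbv := hbv.locallyBoundedVariationOn
  intro t ht
  have ha : a ∈ Icc a b := ⟨le_rfl, ht.1.trans ht.2⟩
  have hclosed : IsClosed ({t | dist (f (g t)) (f (g a)) ≤ r * φ t} ∩ Icc a b) := by
    have hfg : ContinuousOn (f ∘ g) (Icc a b) :=
      ContinuousOn.comp (fun z hz => .of_eventually_dist_le (hf z hz)) hg hgX
    have hφ : ContinuousOn φ (Icc a b) := fun t ht =>
      hlbv.continuousWithinAt_variationOnFromTo ha ht (hg t ht)
    rw [inter_comm]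
    have hdist : ContinuousOn (fun t => dist (f (g t)) (f (g a))) (Icc a b) :=
      (continuous_id.dist continuous_const).comp_continuousOn hfg
    exact (hdist.prodMk (continuousOn_const.mul hφ)).preimage_isClosed_of_isClosed
      isClosed_Icc OrderClosedTopology.isClosed_le'
  refine hclosed.Icc_subset_of_forall_mem_nhdsWithin (by simp [φ, variationOnFromTo.self])
    (fun c ⟨hc, hcab⟩ => ?_) ht
  have hcs : c ∈ Icc a b := Ico_subset_Icc_self hcab
  have hIcc : Icc a b ∈ 𝓝[>] c :=
    mem_of_superset (Ioo_mem_nhdsGT hcab.2) fun u hu => ⟨hcab.1.trans hu.1.le, hu.2.le⟩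
  have hnear : ∀ᶠ u in 𝓝[>] c, dist (f (g u)) (f (g c)) ≤ r * dist (g u) (g c) :=
    (((hg c hcs).tendsto_nhdsWithin hgX).eventually (hf _ (hgX hcs))).filter_mono
      (nhdsWithin_le_of_mem hIcc)
  filter_upwards [hnear, self_mem_nhdsWithin, hIcc] with u hu hcu hus
  calc dist (f (g u)) (f (g a)) ≤ dist (f (g u)) (f (g c)) + dist (f (g c)) (f (g a)) :=
        dist_triangle _ _ _
    _ ≤ r * (φ u - φ c) + r * φ c := by
        gcongr
        exacts [hu.trans (by gcongr; exact hlbv.dist_le_variationOnFromTo_sub ha hcs hus hcu.le),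
          hc]
    _ = r * φ u := by ring

theorem norm_le_unifNorm {X : Set ℂ} {f : ℂ → ℂ} (hX : IsCompact X) (hf : ContinuousOn f X)
    {z : ℂ} (hz : z ∈ X) : ‖f z‖ ≤ UnifNorm X f :=
  le_csSup (hX.image_of_continuousOn hf.norm).bddAbove ⟨z, hz, rfl⟩

theorem RectPath.left_mem {X : Set ℂ} (γ : RectPath X) : γ.toFun γ.a ∈ X :=
  γ.maps ⟨le_rfl, γ.hab.le⟩

theorem RectPath.dist_comp_le_mul_pathLength {X : Set ℂ} {β : Type*} [PseudoMetricSpace β]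
    {f : ℂ → β} {r : ℝ} (hr : 0 ≤ r)
    (hf : ∀ z ∈ X, ∀ᶠ y in 𝓝[X] z, dist (f y) (f z) ≤ r * dist y z) (γ : RectPath X) :
    dist (f (γ.toFun γ.b)) (f (γ.toFun γ.a)) ≤ r * pathLength γ := by
  have := dist_comp_le_mul_variationOnFromTo hr hf γ.cont γ.bv γ.maps γ.b
    ⟨γ.hab.le, le_rfl⟩
  rwa [variationOnFromTo.eq_of_le _ _ γ.hab.le, inter_self] at this

theorem RectPath.dist_le_mul_pathLength_of_hasDerivWithinAt {X : Set ℂ} {f f' : ℂ → ℂ}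
    {M : ℝ} (hf : ∀ z ∈ X, HasDerivWithinAt f (f' z) X z) (hM : ∀ z ∈ X, ‖f' z‖ ≤ M)
    (γ : RectPath X) : dist (f (γ.toFun γ.b)) (f (γ.toFun γ.a)) ≤ M * pathLength γ := by
  have hM₀ : 0 ≤ M := (norm_nonneg _).trans (hM _ γ.left_mem)
  have hlim : Tendsto (fun r => r * pathLength γ) (𝓝[>] M) (𝓝 (M * pathLength γ)) :=
    ((continuous_mul_const _).tendsto M).mono_left nhdsWithin_le_nhds
  refine ge_of_tendsto hlim (eventually_nhdsWithin_of_forall fun r (hr : M < r) => ?_)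
  exact γ.dist_comp_le_mul_pathLength (hM₀.trans hr.le)
    fun z hz => (hf z hz).eventually_dist_le ((hM z hz).trans_lt hr)

theorem stmt9_general (X : Set ℂ) (hXc : IsCompact X)
    (k : ℝ)
    (hreg : ∀ z ∈ X, ∀ w ∈ X, ∃ γ : RectPath X, JoinsIn γ z w ∧
      pathLength γ ≤ k * ‖z - w‖)
    (f f' : ℂ → ℂ) (hf : HasD1 X f f') :
    ∀ z ∈ X, ∀ w ∈ X,
      ‖f z - f w‖ ≤ k * UnifNorm X f' * ‖z - w‖ := by
  intro z hz w hw
  obtain ⟨γ, ⟨rfl, rfl⟩, hlen⟩ := hreg _ hz _ hw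
  have hM : ∀ x ∈ X, ‖f' x‖ ≤ UnifNorm X f' := fun x hx => norm_le_unifNorm hXc hf.2 hx
  calc ‖f (γ.toFun γ.a) - f (γ.toFun γ.b)‖
      = dist (f (γ.toFun γ.b)) (f (γ.toFun γ.a)) := by rw [dist_comm, dist_eq_norm]
    _ ≤ UnifNorm X f' * pathLength γ := γ.dist_le_mul_pathLength_of_hasDerivWithinAt hf.1 hM
    _ ≤ UnifNorm X f' * (k * ‖γ.toFun γ.a - γ.toFun γ.b‖) :=
        mul_le_mul_of_nonneg_left hlen ((norm_nonneg _).trans (hM _ γ.left_mem))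
    _ = k * UnifNorm X f' * ‖γ.toFun γ.a - γ.toFun γ.b‖ := by ring

/-- For a uniformly regular compact plane set `X` (with constant `k`), every
`f ∈ D¹(X)` is Lipschitz: `|f(z) − f(w)| ≤ k·|f'|_X·|z − w|` for all `z, w ∈ X`. -/
theorem stmt9 (X : Set ℂ) (hXc : IsCompact X) (hXne : X.Nonempty)
    (k : ℝ) (hk : 0 < k)
    (hreg : ∀ z ∈ X, ∀ w ∈ X, ∃ γ : RectPath X, JoinsIn γ z w ∧
      pathLength γ ≤ k * ‖z - w‖)
    (f f' : ℂ → ℂ) (hf : HasD1 X f f') :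
    ∀ z ∈ X, ∀ w ∈ X,
      ‖f z - f w‖ ≤ k * UnifNorm X f' * ‖z - w‖ :=
  stmt9_general X hXc k hreg f f' hf
end

section
/- Let Γ : [a,b] → ℂ be a rectifiable path, let f, g ∈ C(Γ([a,b])), let 𝓘 be the set of all non-degenerate closed subintervals J of [a,b] such that ∫_γ g = f(γ⁺) − f(γ⁻) for every subpath γ of Γ|_J, and let E = ⋃𝓘. If I, J ∈ 𝓘 with I ∩ J ≠ ∅, then I ∪ J ∈ 𝓘; moreover every J ∈ 𝓘 is contained in a unique maximal element of 𝓘, and the maximal elements of 𝓘 partition E. -/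
open Complex Set

/-- `J` is a non-degenerate closed subinterval `[c,d]` of `[a,b]` such that
`∫_γ g = f(γ⁺) − f(γ⁻)` for every subpath `γ` of `Γ|_J`. -/
def GoodInterval (Γ : ℝ → ℂ) (f g : ℂ → ℂ) (a b : ℝ) (J : Set ℝ) : Prop :=
  ∃ c d : ℝ, a ≤ c ∧ c < d ∧ d ≤ b ∧ J = Set.Icc c d ∧
    ∀ c' d' : ℝ, c ≤ c' → c' < d' → d' ≤ d →
      IsRSIntegral Γ c' d' g (f (Γ d') - f (Γ c'))

/-- `M` is a maximal element of the family of good intervals. -/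
def MaximalGood (Γ : ℝ → ℂ) (f g : ℂ → ℂ) (a b : ℝ) (M : Set ℝ) : Prop :=
  GoodInterval Γ f g a b M ∧ ∀ K, GoodInterval Γ f g a b K → M ⊆ K → K = M

/-!
Everything rests on two estimates for Riemann–Stieltjes sums along a path `Γ` of bounded variation.
Clamping a fine tagged partition of `[p, q]` by `min · m` and `max · m` yields fine tagged
partitions of `[p, m]` and `[m, q]` whose sums add up to the original one, up to the oscillation of
`g ∘ Γ` near `m` times the variation of `Γ`. This gives additivity over adjacent intervals, hence
the union of two overlapping good intervals is good. Near an endpoint `c` a sum over `[c, m]` is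
close to `g (Γ c) * (Γ m - Γ c)`, which is small by continuity, so the identity
`∫_γ g = f(γ⁺) − f(γ⁻)` passes from all interior subintervals to the closed one. Hence for a good
`J` the interval `[inf S, sup S]`, where `S` is the union of all good intervals containing `J`, is
good, and it is the maximal one.
-/

open Filter Topology

def rsSum (Γ : ℝ → ℂ) (g : ℂ → ℂ) (n : ℕ) (t s : ℕ → ℝ) : ℂ :=
  ∑ i ∈ Finset.range n, g (Γ (s i)) * (Γ (t (i + 1)) - Γ (t i))

structure IsFineTaggedPartition (δ p q : ℝ) (n : ℕ) (t s : ℕ → ℝ) : Prop where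
  first : t 0 = p
  last : t n = q
  le_succ : ∀ i < n, t i ≤ t (i + 1)
  mesh_lt : ∀ i < n, t (i + 1) - t i < δ
  tag_mem : ∀ i < n, s i ∈ Icc (t i) (t (i + 1))

theorem isRSIntegral_iff {Γ : ℝ → ℂ} {p q : ℝ} {g : ℂ → ℂ} {I : ℂ} :
    IsRSIntegral Γ p q g I ↔ ∀ ε > (0 : ℝ), ∃ δ > (0 : ℝ), ∀ n t s,
      IsFineTaggedPartition δ p q n t s → ‖rsSum Γ g n t s - I‖ < ε := by
  refine ⟨fun h ε hε => ?_, fun h ε hε => ?_⟩ <;> obtain ⟨δ, hδ, h⟩ := h ε hε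
  · exact ⟨δ, hδ, fun n t s hP => h n t s hP.1 hP.2 hP.3 hP.4 hP.5⟩
  · exact ⟨δ, hδ, fun n t s h₁ h₂ h₃ h₄ h₅ => h n t s ⟨h₁, h₂, h₃, h₄, h₅⟩⟩

namespace IsFineTaggedPartition

variable {δ p q m : ℝ} {n : ℕ} {t s : ℕ → ℝ}

theorem monotoneOn (hP : IsFineTaggedPartition δ p q n t s) : MonotoneOn t (Iic n) :=
  monotoneOn_of_le_succ ordConnected_Iic fun i _ _ hi => hP.le_succ i hi

theorem mem_Icc (hP : IsFineTaggedPartition δ p q n t s) {i : ℕ} (hi : i ≤ n) :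
    t i ∈ Icc p q :=
  ⟨hP.first ▸ hP.monotoneOn (Nat.zero_le _) hi (Nat.zero_le _),
    hP.last ▸ hP.monotoneOn hi (mem_Iic.2 le_rfl) hi⟩

theorem tag_mem_Icc (hP : IsFineTaggedPartition δ p q n t s) {i : ℕ} (hi : i < n) :
    s i ∈ Icc p q :=
  ⟨(hP.mem_Icc hi.le).1.trans (hP.tag_mem i hi).1, (hP.tag_mem i hi).2.trans (hP.mem_Icc hi).2⟩

theorem mono (hP : IsFineTaggedPartition δ p q n t s) {δ' : ℝ} (h : δ ≤ δ') :
    IsFineTaggedPartition δ' p q n t s :=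
  { hP with mesh_lt := fun i hi => (hP.mesh_lt i hi).trans_le h }

theorem min (hP : IsFineTaggedPartition δ p q n t s) (hm : m ∈ Icc p q) :
    IsFineTaggedPartition δ p m n (fun i => min (t i) m) (fun i => min (s i) m) where
  first := by simp [hP.first, hm.1]
  last := by simp [hP.last, hm.2]
  le_succ i hi := min_le_min_right m (hP.le_succ i hi)
  mesh_lt i hi := by
    have := hP.mesh_lt i hi
    have := hP.le_succ i hi
    simp only [min_def]; split_ifs <;> linarith
  tag_mem i hi := ⟨min_le_min_right m (hP.tag_mem i hi).1, min_le_min_right m (hP.tag_mem i hi).2⟩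

theorem max (hP : IsFineTaggedPartition δ p q n t s) (hm : m ∈ Icc p q) :
    IsFineTaggedPartition δ m q n (fun i => max (t i) m) (fun i => max (s i) m) where
  first := by simp [hP.first, hm.1]
  last := by simp [hP.last, hm.2]
  le_succ i hi := max_le_max_right m (hP.le_succ i hi)
  mesh_lt i hi := by
    have := hP.mesh_lt i hi
    have := hP.le_succ i hi
    simp only [max_def]; split_ifs <;> linarith
  tag_mem i hi := ⟨max_le_max_right m (hP.tag_mem i hi).1, max_le_max_right m (hP.tag_mem i hi).2⟩

theorem sum_norm_sub_le (hP : IsFineTaggedPartition δ p q n t s) {Γ : ℝ → ℂ} {S : Set ℝ}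
    (hΓ : BoundedVariationOn Γ S) (hpq : Icc p q ⊆ S) :
    ∑ i ∈ Finset.range n, ‖Γ (t (i + 1)) - Γ (t i)‖ ≤ (eVariationOn Γ S).toReal := by
  have := ENNReal.toReal_mono hΓ
    (eVariationOn.sum_le_of_monotoneOn_Iic (f := Γ) hP.monotoneOn fun i hi => hpq (hP.mem_Icc hi))
  simpa [ENNReal.toReal_sum, edist_dist, dist_eq_norm] using this

end IsFineTaggedPartition

theorem apply_min_add_apply_max (F : ℝ → ℂ) (x m : ℝ) : F (min x m) + F (max x m) = F x + F m := by
  rcases le_total x m with h | h <;> simp [h, add_comm]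

section Cell

variable {Γ : ℝ → ℂ} {g : ℂ → ℂ} {t s t' m δ ε : ℝ}

-- Unless the cell `[t, t']` straddles `m`, one of the two factors vanishes; if it does, the tag
-- `s` is `δ`-close to `m`.
theorem norm_mul_sub_min_le (hε : 0 ≤ ε) (hts : t ≤ s) (hst : s ≤ t') (htt' : t' - t < δ)
    (hg : |s - m| < δ → ‖g (Γ s) - g (Γ m)‖ ≤ ε) :
    ‖(g (Γ s) - g (Γ (min s m))) * (Γ (min t' m) - Γ (min t m))‖ ≤
      ε * ‖Γ (min t' m) - Γ (min t m)‖ := by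
  rw [norm_mul]
  rcases le_total s m with hsm | hms
  · simp only [min_eq_left hsm, sub_self, norm_zero, zero_mul]; positivity
  rcases le_total m t with hmt | htm
  · simp [min_eq_right hmt, min_eq_right (hmt.trans (hts.trans hst))]
  · rw [min_eq_right hms]
    exact mul_le_mul_of_nonneg_right (hg (by rw [abs_lt]; constructor <;> linarith)) (norm_nonneg _)

theorem norm_mul_sub_max_le (hε : 0 ≤ ε) (hts : t ≤ s) (hst : s ≤ t') (htt' : t' - t < δ)
    (hg : |s - m| < δ → ‖g (Γ s) - g (Γ m)‖ ≤ ε) :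
    ‖(g (Γ s) - g (Γ (max s m))) * (Γ (max t' m) - Γ (max t m))‖ ≤
      ε * ‖Γ (max t' m) - Γ (max t m)‖ := by
  rw [norm_mul]
  rcases le_total m s with hms | hsm
  · simp only [max_eq_left hms, sub_self, norm_zero, zero_mul]; positivity
  rcases le_total t' m with ht'm | hmt'
  · simp [max_eq_right ht'm, max_eq_right ((hts.trans hst).trans ht'm)]
  · rw [max_eq_right hsm]
    exact mul_le_mul_of_nonneg_right (hg (by rw [abs_lt]; constructor <;> linarith)) (norm_nonneg _)

theorem norm_cell_sub_sub_le (hε : 0 ≤ ε) (hts : t ≤ s) (hst : s ≤ t') (htt' : t' - t < δ)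
    (hg : |s - m| < δ → ‖g (Γ s) - g (Γ m)‖ ≤ ε) :
    ‖g (Γ s) * (Γ t' - Γ t) - g (Γ (min s m)) * (Γ (min t' m) - Γ (min t m)) -
        g (Γ (max s m)) * (Γ (max t' m) - Γ (max t m))‖ ≤
      ε * ‖Γ (min t' m) - Γ (min t m)‖ + ε * ‖Γ (max t' m) - Γ (max t m)‖ :=
  calc _ = ‖(g (Γ s) - g (Γ (min s m))) * (Γ (min t' m) - Γ (min t m)) +
          (g (Γ s) - g (Γ (max s m))) * (Γ (max t' m) - Γ (max t m))‖ := by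
        congr 1
        linear_combination
          g (Γ s) * (apply_min_add_apply_max Γ t m - apply_min_add_apply_max Γ t' m)
    _ ≤ _ := (norm_add_le _ _).trans (add_le_add (norm_mul_sub_min_le hε hts hst htt' hg)
        (norm_mul_sub_max_le hε hts hst htt' hg))

end Cell

section Split

variable {Γ : ℝ → ℂ} {g : ℂ → ℂ} {S : Set ℝ} {δ p q m ε : ℝ} {n : ℕ} {t s : ℕ → ℝ}

theorem norm_rsSum_sub_rsSum_min_sub_rsSum_max_le (hP : IsFineTaggedPartition δ p q n t s)
    (hm : m ∈ Icc p q) (hΓ : BoundedVariationOn Γ S) (hpq : Icc p q ⊆ S) (hε : 0 ≤ ε)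
    (hg : ∀ x ∈ Icc p q, |x - m| < δ → ‖g (Γ x) - g (Γ m)‖ ≤ ε) :
    ‖rsSum Γ g n t s - rsSum Γ g n (fun i => min (t i) m) (fun i => min (s i) m) -
        rsSum Γ g n (fun i => max (t i) m) (fun i => max (s i) m)‖ ≤
      2 * ε * (eVariationOn Γ S).toReal := by
  have hA := (hP.min hm).sum_norm_sub_le hΓ ((Icc_subset_Icc_right hm.2).trans hpq)
  have hB := (hP.max hm).sum_norm_sub_le hΓ ((Icc_subset_Icc_left hm.1).trans hpq)
  simp only [rsSum, ← Finset.sum_sub_distrib]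
  calc _ ≤ ∑ i ∈ Finset.range n,
        (ε * ‖Γ (min (t (i + 1)) m) - Γ (min (t i) m)‖ +
          ε * ‖Γ (max (t (i + 1)) m) - Γ (max (t i) m)‖) := by
        refine (norm_sum_le _ _).trans (Finset.sum_le_sum fun i hi => ?_)
        have hi := Finset.mem_range.1 hi
        exact norm_cell_sub_sub_le hε (hP.tag_mem i hi).1 (hP.tag_mem i hi).2 (hP.mesh_lt i hi)
          (hg (s i) (hP.tag_mem_Icc hi))
    _ ≤ 2 * ε * (eVariationOn Γ S).toReal := by
        rw [Finset.sum_add_distrib, ← Finset.mul_sum, ← Finset.mul_sum]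
        nlinarith [mul_le_mul_of_nonneg_left hA hε, mul_le_mul_of_nonneg_left hB hε]

theorem IsFineTaggedPartition.norm_rsSum_sub_mul_le (hP : IsFineTaggedPartition δ p q n t s)
    (hΓ : BoundedVariationOn Γ S) (hpq : Icc p q ⊆ S) {w : ℂ}
    (hg : ∀ x ∈ Icc p q, ‖g (Γ x) - w‖ ≤ ε) :
    ‖rsSum Γ g n t s - w * (Γ q - Γ p)‖ ≤ ε * (eVariationOn Γ S).toReal := by
  have hε : 0 ≤ ε :=
    (norm_nonneg _).trans (hg p ⟨le_rfl, (hP.mem_Icc le_rfl).1.trans (hP.mem_Icc le_rfl).2⟩)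
  have htel : rsSum Γ g n t s - w * (Γ q - Γ p) =
      ∑ i ∈ Finset.range n, (g (Γ (s i)) - w) * (Γ (t (i + 1)) - Γ (t i)) := by
    rw [← hP.first, ← hP.last, ← Finset.sum_range_sub (fun i => Γ (t i)), Finset.mul_sum, rsSum,
      ← Finset.sum_sub_distrib]
    exact Finset.sum_congr rfl fun i _ => by ring
  rw [htel]
  calc _ ≤ ∑ i ∈ Finset.range n, ε * ‖Γ (t (i + 1)) - Γ (t i)‖ := by
        refine (norm_sum_le _ _).trans (Finset.sum_le_sum fun i hi => ?_)
        rw [norm_mul]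
        exact mul_le_mul_of_nonneg_right (hg _ (hP.tag_mem_Icc (Finset.mem_range.1 hi)))
          (norm_nonneg _)
    _ ≤ ε * (eVariationOn Γ S).toReal := by
        rw [← Finset.mul_sum]
        exact mul_le_mul_of_nonneg_left (hP.sum_norm_sub_le hΓ hpq) hε

end Split

section Continuity

variable {F : ℝ → ℂ} {S : Set ℝ} {c d x₀ ε : ℝ}

theorem ContinuousWithinAt.exists_pos_forall_norm_sub_lt (hF : ContinuousWithinAt F S x₀)
    (hε : 0 < ε) : ∃ δ > 0, ∀ x ∈ S, |x - x₀| < δ → ‖F x - F x₀‖ < ε := by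
  simpa [Real.dist_eq, dist_eq_norm] using Metric.continuousWithinAt_iff.1 hF ε hε

theorem ContinuousWithinAt.eventually_nhdsGT_forall_Icc (hF : ContinuousWithinAt F (Icc c d) c)
    (hcd : c < d) (hε : 0 < ε) : ∀ᶠ m in 𝓝[>] c, ∀ x ∈ Icc c m, ‖F x - F c‖ < ε := by
  obtain ⟨δ, hδ, H⟩ := hF.exists_pos_forall_norm_sub_lt hε
  filter_upwards [Ioo_mem_nhdsGT (lt_min (by linarith) hcd : c < min (c + δ) d)] with m hm x hx
  have := lt_min_iff.1 hm.2
  exact H x ⟨hx.1, by linarith [hx.2]⟩ (by rw [abs_lt]; constructor <;> linarith [hx.1, hx.2])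

theorem ContinuousWithinAt.eventually_nhdsLT_forall_Icc (hF : ContinuousWithinAt F (Icc c d) d)
    (hcd : c < d) (hε : 0 < ε) : ∀ᶠ m in 𝓝[<] d, ∀ x ∈ Icc m d, ‖F x - F d‖ < ε := by
  obtain ⟨δ, hδ, H⟩ := hF.exists_pos_forall_norm_sub_lt hε
  filter_upwards [Ioo_mem_nhdsLT (max_lt (by linarith) hcd : max (d - δ) c < d)] with m hm x hx
  have := max_lt_iff.1 hm.1
  exact H x ⟨by linarith [hx.1], hx.2⟩ (by rw [abs_lt]; constructor <;> linarith [hx.1, hx.2])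

end Continuity

section Integral

variable {Γ : ℝ → ℂ} {f g : ℂ → ℂ} {p m q c d : ℝ} {I J : ℂ}

theorem IsRSIntegral.add_adjacent (hΓ : BoundedVariationOn Γ (Icc p q)) (hm : m ∈ Icc p q)
    (hg : ContinuousWithinAt (fun x => g (Γ x)) (Icc p q) m)
    (h₁ : IsRSIntegral Γ p m g I) (h₂ : IsRSIntegral Γ m q g J) :
    IsRSIntegral Γ p q g (I + J) := by
  rw [isRSIntegral_iff] at *
  intro ε hε
  set V := (eVariationOn Γ (Icc p q)).toReal
  set ε' := ε / (3 * (2 * V + 1))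
  have hV : 0 ≤ V := ENNReal.toReal_nonneg
  have hε' : ε' * (3 * (2 * V + 1)) = ε := div_mul_cancel₀ _ (by positivity)
  obtain ⟨δ₁, hδ₁, H₁⟩ := h₁ (ε / 3) (by positivity)
  obtain ⟨δ₂, hδ₂, H₂⟩ := h₂ (ε / 3) (by positivity)
  obtain ⟨δ₃, hδ₃, H₃⟩ := hg.exists_pos_forall_norm_sub_lt (by positivity : 0 < ε')
  refine ⟨min δ₁ (min δ₂ δ₃), by positivity, fun n t s hP => ?_⟩
  have e₁ := H₁ _ _ _ ((hP.min hm).mono (min_le_left _ _))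
  have e₂ := H₂ _ _ _ ((hP.max hm).mono ((min_le_right _ _).trans (min_le_left _ _)))
  have e₃ := norm_rsSum_sub_rsSum_min_sub_rsSum_max_le hP hm hΓ subset_rfl (by positivity)
    fun x hx hxm => (H₃ x hx (hxm.trans_le ((min_le_right _ _).trans (min_le_right _ _)))).le
  set S₁ := rsSum Γ g n (fun i => min (t i) m) (fun i => min (s i) m)
  set S₂ := rsSum Γ g n (fun i => max (t i) m) (fun i => max (s i) m)
  calc ‖rsSum Γ g n t s - (I + J)‖ = ‖(rsSum Γ g n t s - S₁ - S₂) + (S₁ - I) + (S₂ - J)‖ := by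
        ring_nf
    _ ≤ ‖rsSum Γ g n t s - S₁ - S₂‖ + ‖S₁ - I‖ + ‖S₂ - J‖ := norm_add₃_le
    _ < ε := by nlinarith

theorem isRSIntegral_of_forall_Ioo_left (hΓ : BoundedVariationOn Γ (Icc c d))
    (hΓc : ContinuousWithinAt Γ (Icc c d) c)
    (hf : ContinuousWithinAt (fun x => f (Γ x)) (Icc c d) c)
    (hg : ContinuousOn (fun x => g (Γ x)) (Icc c d)) (hcd : c < d)
    (h : ∀ c' ∈ Ioo c d, IsRSIntegral Γ c' d g (f (Γ d) - f (Γ c'))) :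
    IsRSIntegral Γ c d g (f (Γ d) - f (Γ c)) := by
  rw [isRSIntegral_iff]
  intro ε hε
  set V := (eVariationOn Γ (Icc c d)).toReal
  set K := ‖g (Γ c)‖
  set ε' := ε / (3 * V + K + 2)
  have hV : 0 ≤ V := ENNReal.toReal_nonneg
  have hε'pos : 0 < ε' := by positivity
  have hε' : ε' * (3 * V + K + 2) = ε := div_mul_cancel₀ _ (by positivity)
  obtain ⟨m, ⟨⟨hgm, hΓm⟩, hfm⟩, hm⟩ :=
    ((((hg c (left_mem_Icc.2 hcd.le)).eventually_nhdsGT_forall_Icc hcd hε'pos).and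
      (hΓc.eventually_nhdsGT_forall_Icc hcd hε'pos)).and
        (hf.eventually_nhdsGT_forall_Icc hcd hε'pos) |>.and (Ioo_mem_nhdsGT hcd)).exists
  have hmcd : m ∈ Icc c d := Ioo_subset_Icc_self hm
  obtain ⟨δ₁, hδ₁, H₁⟩ := (isRSIntegral_iff.1 (h m hm)) ε' hε'pos
  obtain ⟨δ₂, hδ₂, H₂⟩ := (hg m hmcd).exists_pos_forall_norm_sub_lt hε'pos
  refine ⟨min δ₁ δ₂, by positivity, fun n t s hP => ?_⟩
  set S₁ := rsSum Γ g n (fun i => min (t i) m) (fun i => min (s i) m)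
  set S₂ := rsSum Γ g n (fun i => max (t i) m) (fun i => max (s i) m)
  have e₁ : ‖rsSum Γ g n t s - S₁ - S₂‖ ≤ 2 * ε' * V :=
    norm_rsSum_sub_rsSum_min_sub_rsSum_max_le hP hmcd hΓ subset_rfl hε'pos.le
      fun x hx hxm => (H₂ x hx (hxm.trans_le (min_le_right _ _))).le
  have e₂ : ‖S₁ - g (Γ c) * (Γ m - Γ c)‖ ≤ ε' * V :=
    (hP.min hmcd).norm_rsSum_sub_mul_le hΓ (Icc_subset_Icc_right hm.2.le)
      fun x hx => (hgm x hx).le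
  have e₃ : ‖g (Γ c) * (Γ m - Γ c)‖ ≤ K * ε' := by
    rw [norm_mul]
    exact mul_le_mul_of_nonneg_left (hΓm m ⟨hm.1.le, le_rfl⟩).le (norm_nonneg _)
  have e₄ : ‖S₂ - (f (Γ d) - f (Γ m))‖ < ε' := H₁ _ _ _ ((hP.max hmcd).mono (min_le_left _ _))
  have e₅ : ‖f (Γ m) - f (Γ c)‖ < ε' := hfm m ⟨hm.1.le, le_rfl⟩
  calc ‖rsSum Γ g n t s - (f (Γ d) - f (Γ c))‖
      = ‖(rsSum Γ g n t s - S₁ - S₂) + (S₁ - g (Γ c) * (Γ m - Γ c)) + g (Γ c) * (Γ m - Γ c) +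
          (S₂ - (f (Γ d) - f (Γ m))) - (f (Γ m) - f (Γ c))‖ := by ring_nf
    _ ≤ ‖rsSum Γ g n t s - S₁ - S₂‖ + ‖S₁ - g (Γ c) * (Γ m - Γ c)‖ + ‖g (Γ c) * (Γ m - Γ c)‖ +
          ‖S₂ - (f (Γ d) - f (Γ m))‖ + ‖f (Γ m) - f (Γ c)‖ := by
        refine (norm_sub_le _ _).trans (add_le_add_left ?_ _)
        exact (norm_add_le _ _).trans (add_le_add_left norm_add₃_le _)
    _ < ε := by nlinarith

theorem isRSIntegral_of_forall_Ioo_right (hΓ : BoundedVariationOn Γ (Icc c d))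
    (hΓc : ContinuousWithinAt Γ (Icc c d) d)
    (hf : ContinuousWithinAt (fun x => f (Γ x)) (Icc c d) d)
    (hg : ContinuousOn (fun x => g (Γ x)) (Icc c d)) (hcd : c < d)
    (h : ∀ d' ∈ Ioo c d, IsRSIntegral Γ c d' g (f (Γ d') - f (Γ c))) :
    IsRSIntegral Γ c d g (f (Γ d) - f (Γ c)) := by
  rw [isRSIntegral_iff]
  intro ε hε
  set V := (eVariationOn Γ (Icc c d)).toReal
  set K := ‖g (Γ d)‖
  set ε' := ε / (3 * V + K + 2)
  have hV : 0 ≤ V := ENNReal.toReal_nonneg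
  have hε'pos : 0 < ε' := by positivity
  have hε' : ε' * (3 * V + K + 2) = ε := div_mul_cancel₀ _ (by positivity)
  obtain ⟨m, ⟨⟨hgm, hΓm⟩, hfm⟩, hm⟩ :=
    ((((hg d (right_mem_Icc.2 hcd.le)).eventually_nhdsLT_forall_Icc hcd hε'pos).and
      (hΓc.eventually_nhdsLT_forall_Icc hcd hε'pos)).and
        (hf.eventually_nhdsLT_forall_Icc hcd hε'pos) |>.and (Ioo_mem_nhdsLT hcd)).exists
  have hmcd : m ∈ Icc c d := Ioo_subset_Icc_self hm
  obtain ⟨δ₁, hδ₁, H₁⟩ := (isRSIntegral_iff.1 (h m hm)) ε' hε'pos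
  obtain ⟨δ₂, hδ₂, H₂⟩ := (hg m hmcd).exists_pos_forall_norm_sub_lt hε'pos
  refine ⟨min δ₁ δ₂, by positivity, fun n t s hP => ?_⟩
  set S₁ := rsSum Γ g n (fun i => min (t i) m) (fun i => min (s i) m)
  set S₂ := rsSum Γ g n (fun i => max (t i) m) (fun i => max (s i) m)
  have e₁ : ‖rsSum Γ g n t s - S₁ - S₂‖ ≤ 2 * ε' * V :=
    norm_rsSum_sub_rsSum_min_sub_rsSum_max_le hP hmcd hΓ subset_rfl hε'pos.le
      fun x hx hxm => (H₂ x hx (hxm.trans_le (min_le_right _ _))).le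
  have e₂ : ‖S₂ - g (Γ d) * (Γ d - Γ m)‖ ≤ ε' * V :=
    (hP.max hmcd).norm_rsSum_sub_mul_le hΓ (Icc_subset_Icc_left hm.1.le)
      fun x hx => (hgm x hx).le
  have e₃ : ‖g (Γ d) * (Γ d - Γ m)‖ ≤ K * ε' := by
    rw [norm_mul, norm_sub_rev]
    exact mul_le_mul_of_nonneg_left (hΓm m ⟨le_rfl, hm.2.le⟩).le (norm_nonneg _)
  have e₄ : ‖S₁ - (f (Γ m) - f (Γ c))‖ < ε' := H₁ _ _ _ ((hP.min hmcd).mono (min_le_left _ _))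
  have e₅ : ‖f (Γ m) - f (Γ d)‖ < ε' := hfm m ⟨le_rfl, hm.2.le⟩
  calc ‖rsSum Γ g n t s - (f (Γ d) - f (Γ c))‖
      = ‖(rsSum Γ g n t s - S₁ - S₂) + (S₂ - g (Γ d) * (Γ d - Γ m)) + g (Γ d) * (Γ d - Γ m) +
          (S₁ - (f (Γ m) - f (Γ c))) + (f (Γ m) - f (Γ d))‖ := by ring_nf
    _ ≤ ‖rsSum Γ g n t s - S₁ - S₂‖ + ‖S₂ - g (Γ d) * (Γ d - Γ m)‖ + ‖g (Γ d) * (Γ d - Γ m)‖ +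
          ‖S₁ - (f (Γ m) - f (Γ c))‖ + ‖f (Γ m) - f (Γ d)‖ := by
        refine (norm_add_le _ _).trans (add_le_add_left ?_ _)
        exact (norm_add_le _ _).trans (add_le_add_left norm_add₃_le _)
    _ < ε := by nlinarith

theorem isRSIntegral_of_forall_Ioo (hΓ : BoundedVariationOn Γ (Icc c d))
    (hΓc : ContinuousOn Γ (Icc c d)) (hf : ContinuousOn (fun x => f (Γ x)) (Icc c d))
    (hg : ContinuousOn (fun x => g (Γ x)) (Icc c d)) (hcd : c < d)
    (h : ∀ c' d', c < c' → c' < d' → d' < d → IsRSIntegral Γ c' d' g (f (Γ d') - f (Γ c'))) :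
    IsRSIntegral Γ c d g (f (Γ d) - f (Γ c)) := by
  have hc : c ∈ Icc c d := left_mem_Icc.2 hcd.le
  have hd : d ∈ Icc c d := right_mem_Icc.2 hcd.le
  refine isRSIntegral_of_forall_Ioo_left hΓ (hΓc c hc) (hf c hc) hg hcd fun c' hc' => ?_
  have hsub : Icc c' d ⊆ Icc c d := Icc_subset_Icc_left hc'.1.le
  exact isRSIntegral_of_forall_Ioo_right (hΓ.mono hsub) ((hΓc d hd).mono hsub)
    ((hf d hd).mono hsub) (hg.mono hsub) hc'.2
    fun d' hd' => h c' d' hc'.1 hd'.1 hd'.2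

end Integral

section GoodIntervals

variable {Γ : ℝ → ℂ} {f g : ℂ → ℂ} {a b c d x y z : ℝ} {I J K M N : Set ℝ}

theorem GoodInterval.isRSIntegral (hK : GoodInterval Γ f g a b K) (hx : x ∈ K) (hy : y ∈ K)
    (hxy : x < y) : IsRSIntegral Γ x y g (f (Γ y) - f (Γ x)) := by
  obtain ⟨c, d, -, -, -, rfl, h⟩ := hK
  exact h x y hx.1 hxy hy.2

theorem GoodInterval.subset_Icc (hK : GoodInterval Γ f g a b K) : K ⊆ Icc a b := by
  obtain ⟨c, d, hac, -, hdb, rfl, -⟩ := hK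
  exact Icc_subset_Icc hac hdb

theorem GoodInterval.ordConnected (hK : GoodInterval Γ f g a b K) : K.OrdConnected := by
  obtain ⟨c, d, -, -, -, rfl, -⟩ := hK
  exact ordConnected_Icc

theorem GoodInterval.nonempty (hK : GoodInterval Γ f g a b K) : K.Nonempty := by
  obtain ⟨c, d, -, hcd, -, rfl, -⟩ := hK
  exact nonempty_Icc.2 hcd.le

theorem goodInterval_Icc (hac : a ≤ c) (hcd : c < d) (hdb : d ≤ b)
    (h : ∀ x ∈ Icc c d, ∀ y ∈ Icc c d, x < y → IsRSIntegral Γ x y g (f (Γ y) - f (Γ x))) :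
    GoodInterval Γ f g a b (Icc c d) :=
  ⟨c, d, hac, hcd, hdb, rfl, fun x y hcx hxy hyd =>
    h x ⟨hcx, hxy.le.trans hyd⟩ y ⟨hcx.trans hxy.le, hyd⟩ hxy⟩

theorem GoodInterval.isRSIntegral_of_mem_union (hΓ : BoundedVariationOn Γ (Icc a b))
    (hg : ContinuousOn (fun x => g (Γ x)) (Icc a b)) (hI : GoodInterval Γ f g a b I)
    (hJ : GoodInterval Γ f g a b J) (hzI : z ∈ I) (hzJ : z ∈ J) (hx : x ∈ I ∪ J)
    (hy : y ∈ I ∪ J) (hxy : x < y) : IsRSIntegral Γ x y g (f (Γ y) - f (Γ x)) := by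
  have pair : ∀ {x y}, x < y → x ∈ I ∧ y ∈ I ∨ x ∈ J ∧ y ∈ J →
      IsRSIntegral Γ x y g (f (Γ y) - f (Γ x)) := by
    rintro x y hxy (⟨hx, hy⟩ | ⟨hx, hy⟩)
    exacts [hI.isRSIntegral hx hy hxy, hJ.isRSIntegral hx hy hxy]
  rcases le_or_gt z x with hzx | hxz
  · exact pair hxy <| hy.imp (fun h => ⟨hI.ordConnected.out hzI h ⟨hzx, hxy.le⟩, h⟩)
      fun h => ⟨hJ.ordConnected.out hzJ h ⟨hzx, hxy.le⟩, h⟩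
  rcases le_or_gt y z with hyz | hzy
  · exact pair hxy <| hx.imp (fun h => ⟨h, hI.ordConnected.out h hzI ⟨hxy.le, hyz⟩⟩)
      fun h => ⟨h, hJ.ordConnected.out h hzJ ⟨hxy.le, hyz⟩⟩
  have hIJ := union_subset hI.subset_Icc hJ.subset_Icc
  have hxy_ab : Icc x y ⊆ Icc a b := Icc_subset_Icc (hIJ hx).1 (hIJ hy).2
  have := (pair hxz (hx.imp (⟨·, hzI⟩) (⟨·, hzJ⟩))).add_adjacent (hΓ.mono hxy_ab)
    ⟨hxz.le, hzy.le⟩ ((hg z (hxy_ab ⟨hxz.le, hzy.le⟩)).mono hxy_ab)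
    (pair hzy (hy.imp (⟨hzI, ·⟩) (⟨hzJ, ·⟩)))
  rwa [sub_add_sub_cancel'] at this

theorem GoodInterval.union (hΓ : BoundedVariationOn Γ (Icc a b))
    (hg : ContinuousOn (fun x => g (Γ x)) (Icc a b)) (hI : GoodInterval Γ f g a b I)
    (hJ : GoodInterval Γ f g a b J) (hIJ : (I ∩ J).Nonempty) : GoodInterval Γ f g a b (I ∪ J) := by
  obtain ⟨z, hzI, hzJ⟩ := hIJ
  obtain ⟨c₁, d₁, hac₁, hcd₁, hdb₁, rfl, -⟩ := id hI
  obtain ⟨c₂, d₂, hac₂, -, hdb₂, rfl, -⟩ := id hJ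
  have hU := Icc_union_Icc' (hzJ.1.trans hzI.2) (hzI.1.trans hzJ.2)
  rw [hU]
  refine goodInterval_Icc (le_min hac₁ hac₂) ((min_le_left _ _).trans_lt
    (hcd₁.trans_le (le_max_left _ _))) (max_le hdb₁ hdb₂) fun x hx y hy hxy => ?_
  rw [← hU] at hx hy
  exact hI.isRSIntegral_of_mem_union hΓ hg hJ hzI hzJ hx hy hxy

theorem MaximalGood.eq_of_inter_nonempty (hΓ : BoundedVariationOn Γ (Icc a b))
    (hg : ContinuousOn (fun x => g (Γ x)) (Icc a b)) (hM : MaximalGood Γ f g a b M)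
    (hN : MaximalGood Γ f g a b N) (hMN : (M ∩ N).Nonempty) : M = N := by
  have hU := hM.1.union hΓ hg hN.1 hMN
  exact (hM.2 _ hU subset_union_left).symm.trans (hN.2 _ hU subset_union_right)

theorem GoodInterval.exists_maximalGood_superset (hΓ : BoundedVariationOn Γ (Icc a b))
    (hΓc : ContinuousOn Γ (Icc a b)) (hf : ContinuousOn (fun x => f (Γ x)) (Icc a b))
    (hg : ContinuousOn (fun x => g (Γ x)) (Icc a b)) (hJ : GoodInterval Γ f g a b J) :
    ∃ M, MaximalGood Γ f g a b M ∧ J ⊆ M := by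
  set S := ⋃₀ {K | GoodInterval Γ f g a b K ∧ J ⊆ K}
  have hSab : S ⊆ Icc a b := sUnion_subset fun K hK => hK.1.subset_Icc
  have hJS : J ⊆ S := subset_sUnion_of_mem ⟨hJ, subset_rfl⟩
  have hS : S ⊆ Icc (sInf S) (sSup S) :=
    subset_Icc_csInf_csSup ⟨a, fun x hx => (hSab hx).1⟩ ⟨b, fun x hx => (hSab hx).2⟩
  obtain ⟨c, d, -, hcd, -, rfl, -⟩ := id hJ
  have hcS : c ∈ S := hJS (left_mem_Icc.2 hcd.le)
  have hdS : d ∈ S := hJS (right_mem_Icc.2 hcd.le)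
  have haC : a ≤ sInf S := le_csInf ⟨c, hcS⟩ fun x hx => (hSab hx).1
  have hDb : sSup S ≤ b := csSup_le ⟨c, hcS⟩ fun x hx => (hSab hx).2
  have hM : GoodInterval Γ f g a b (Icc (sInf S) (sSup S)) := by
    refine goodInterval_Icc haC ((hS hcS).1.trans_lt (hcd.trans_le (hS hdS).2)) hDb
      fun x hx y hy hxy => ?_
    have hxy_ab : Icc x y ⊆ Icc a b := Icc_subset_Icc (haC.trans hx.1) (hy.2.trans hDb)
    refine isRSIntegral_of_forall_Ioo (hΓ.mono hxy_ab) (hΓc.mono hxy_ab) (hf.mono hxy_ab)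
      (hg.mono hxy_ab) hxy fun x' y' hxx' hx'y' hy'y => ?_
    obtain ⟨u, ⟨K₁, ⟨hK₁, hJK₁⟩, hu⟩, hux'⟩ := exists_lt_of_csInf_lt ⟨c, hcS⟩ (hx.1.trans_lt hxx')
    obtain ⟨v, ⟨K₂, ⟨hK₂, hJK₂⟩, hv⟩, hy'v⟩ := exists_lt_of_lt_csSup ⟨c, hcS⟩ (hy'y.trans_le hy.2)
    have hK := hK₁.union hΓ hg hK₂ ((nonempty_Icc.2 hcd.le).mono (subset_inter hJK₁ hJK₂))
    have huv : Icc u v ⊆ K₁ ∪ K₂ := hK.ordConnected.out (Or.inl hu) (Or.inr hv)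
    exact hK.isRSIntegral (huv ⟨hux'.le, by linarith⟩) (huv ⟨by linarith, hy'v.le⟩) hx'y'
  refine ⟨_, ⟨hM, fun K hK hMK => ?_⟩, hJS.trans hS⟩
  have hKS : K ⊆ S := subset_sUnion_of_mem (show K ∈ {K | GoodInterval Γ f g a b K ∧ _} from
    ⟨hK, (hJS.trans hS).trans hMK⟩)
  exact (hKS.trans hS).antisymm hMK

end GoodIntervals

theorem stmt10_general (a b : ℝ) (Γ : ℝ → ℂ)
    (hΓc : ContinuousOn Γ (Set.Icc a b)) (hΓbv : BoundedVariationOn Γ (Set.Icc a b))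
    (f g : ℂ → ℂ) (hf : ContinuousOn f (Γ '' Set.Icc a b))
    (hg : ContinuousOn g (Γ '' Set.Icc a b)) :
    (∀ I J : Set ℝ, GoodInterval Γ f g a b I → GoodInterval Γ f g a b J →
      (I ∩ J).Nonempty → GoodInterval Γ f g a b (I ∪ J)) ∧
    (∀ J : Set ℝ, GoodInterval Γ f g a b J →
      ∃! M : Set ℝ, MaximalGood Γ f g a b M ∧ J ⊆ M) ∧
    (∀ M N : Set ℝ, MaximalGood Γ f g a b M → MaximalGood Γ f g a b N → M ≠ N →
      Disjoint M N) ∧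
    ⋃₀ {M | MaximalGood Γ f g a b M} = ⋃₀ {J | GoodInterval Γ f g a b J} := by
  have hgΓ : ContinuousOn (fun x => g (Γ x)) (Icc a b) := hg.comp hΓc (mapsTo_image _ _)
  have hfΓ : ContinuousOn (fun x => f (Γ x)) (Icc a b) := hf.comp hΓc (mapsTo_image _ _)
  have hmax := fun {J} (hJ : GoodInterval Γ f g a b J) =>
    hJ.exists_maximalGood_superset hΓbv hΓc hfΓ hgΓ
  refine ⟨fun I J hI hJ => hI.union hΓbv hgΓ hJ, fun J hJ => ?_, fun M N hM hN hMN => ?_, ?_⟩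
  · obtain ⟨M, hM, hJM⟩ := hmax hJ
    exact ⟨M, ⟨hM, hJM⟩, fun M' ⟨hM', hJM'⟩ =>
      hM'.eq_of_inter_nonempty hΓbv hgΓ hM (hJ.nonempty.mono (subset_inter hJM' hJM))⟩
  · by_contra h
    exact hMN (hM.eq_of_inter_nonempty hΓbv hgΓ hN (not_disjoint_iff_nonempty_inter.1 h))
  · refine (sUnion_subset_sUnion fun M hM => hM.1).antisymm (sUnion_subset fun J hJ => ?_)
    obtain ⟨M, hM, hJM⟩ := hmax hJ
    exact hJM.trans (subset_sUnion_of_mem hM)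

/-- Properties of the family `𝓘` of good intervals: it is closed under unions of
intersecting members, every member lies in a unique maximal member, and the maximal
members partition `E = ⋃𝓘`. -/
theorem stmt10 (a b : ℝ) (hab : a < b) (Γ : ℝ → ℂ)
    (hΓc : ContinuousOn Γ (Set.Icc a b)) (hΓbv : BoundedVariationOn Γ (Set.Icc a b))
    (f g : ℂ → ℂ) (hf : ContinuousOn f (Γ '' Set.Icc a b))
    (hg : ContinuousOn g (Γ '' Set.Icc a b)) :
    (∀ I J : Set ℝ, GoodInterval Γ f g a b I → GoodInterval Γ f g a b J →
      (I ∩ J).Nonempty → GoodInterval Γ f g a b (I ∪ J)) ∧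
    (∀ J : Set ℝ, GoodInterval Γ f g a b J →
      ∃! M : Set ℝ, MaximalGood Γ f g a b M ∧ J ⊆ M) ∧
    (∀ M N : Set ℝ, MaximalGood Γ f g a b M → MaximalGood Γ f g a b N → M ≠ N →
      Disjoint M N) ∧
    ⋃₀ {M | MaximalGood Γ f g a b M} = ⋃₀ {J | GoodInterval Γ f g a b J} :=
  stmt10_general a b Γ hΓc hΓbv f g hf hg
end

section
/- Let Γ : [a,b] → ℂ be a rectifiable path, f, g ∈ C(Γ([a,b])), let 𝓘 be the set of non-degenerate closed subintervals J of [a,b] such that ∫_γ g = f(γ⁺) − f(γ⁻) for every subpath γ of Γ|_J, and let E = ⋃𝓘. Then either E = [a,b] or [a,b] \ E is uncountable. -/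
open Complex Set

/-!
Call `x ∈ [a,b]` good if some good interval is a neighbourhood of `x` in `[a,b]`. The bad points
form a closed set `B ⊇ [a,b] \ E`, and `B ∩ E` is countable: each of its points is an endpoint of
a good interval, and the interior of that interval contains no other bad point.

Riemann–Stieltjes sums split additively over adjacent intervals up to an error controlled by the
uniform continuity of `g ∘ Γ`, and sums over short intervals ending at a point are small because
the variation of the continuous path `Γ` there tends to `0`. With the continuity of `f ∘ Γ` this
shows that an isolated point of `B` is good. Hence, if `[a,b] \ E` is countable, `B` is a countable
perfect set, so it is empty and `E = [a,b]`.
-/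

open Filter Topology

lemma Set.countable_of_forall_notMem_Ioo_right {s : Set ℝ} {y : ℝ → ℝ} (hy : ∀ x ∈ s, x < y x)
    (h : ∀ x ∈ s, ∀ x' ∈ s, x' ∉ Ioo x (y x)) : s.Countable := by
  refine PairwiseDisjoint.countable_of_Ioo (fun x hx x' hx' hne ↦ ?_) hy
  rw [Function.onFun, Ioo_disjoint_Ioo]
  rcases hne.lt_or_gt with hlt | hlt
  · exact (min_le_left _ _).trans ((not_lt.1 fun h' ↦ h x hx x' hx' ⟨hlt, h'⟩).trans
      (le_max_right _ _))
  · exact (min_le_right _ _).trans ((not_lt.1 fun h' ↦ h x' hx' x hx ⟨hlt, h'⟩).trans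
      (le_max_left _ _))

lemma Set.countable_of_forall_notMem_Ioo_left {s : Set ℝ} {y : ℝ → ℝ} (hy : ∀ x ∈ s, y x < x)
    (h : ∀ x ∈ s, ∀ x' ∈ s, x' ∉ Ioo (y x) x) : s.Countable := by
  have : (-s).Countable := countable_of_forall_notMem_Ioo_right (y := fun x ↦ -y (-x))
    (fun x hx ↦ lt_neg_of_lt_neg (hy _ hx))
    (fun x hx x' hx' hmem ↦ h _ hx _ hx' ⟨lt_neg_of_lt_neg hmem.2, neg_lt_neg hmem.1⟩)
  simpa using this.image Neg.neg

lemma Perfect.not_countable {α : Type*} [MetricSpace α] [CompleteSpace α] {C : Set α}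
    (hC : Perfect C) (hne : C.Nonempty) : ¬ C.Countable := by
  intro hcount
  obtain ⟨φ, hφC, -, hφ⟩ := hC.exists_nat_bool_injection hne
  have : Uncountable (ℕ → Bool) := by
    rw [← Cardinal.aleph0_lt_mk_iff]
    simpa using Cardinal.cantor Cardinal.aleph0
  have := (hcount.mono hφC).to_subtype
  exact _root_.not_countable (Equiv.ofInjective φ hφ).injective.countable

structure TaggedPartition (c d : ℝ) where
  n : ℕ
  t : ℕ → ℝ
  tag : ℕ → ℝ
  t_zero : t 0 = c
  t_n : t n = d
  t_le_t_succ : ∀ i < n, t i ≤ t (i + 1)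
  tag_mem : ∀ i < n, tag i ∈ Icc (t i) (t (i + 1))

namespace TaggedPartition

variable {c d m δ δ' : ℝ} {γ : ℝ → ℂ} {g : ℂ → ℂ} (P : TaggedPartition c d)

def MeshLT (δ : ℝ) : Prop := ∀ i < P.n, P.t (i + 1) - P.t i < δ

def rsSum (γ : ℝ → ℂ) (g : ℂ → ℂ) : ℂ :=
  ∑ i ∈ Finset.range P.n, g (γ (P.tag i)) * (γ (P.t (i + 1)) - γ (P.t i))

variable {P}

lemma MeshLT.mono (h : P.MeshLT δ) (hδ : δ ≤ δ') : P.MeshLT δ' :=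
  fun i hi ↦ (h i hi).trans_le hδ

variable (P)

lemma monotoneOn_t : MonotoneOn P.t (Icc 0 P.n) :=
  monotoneOn_of_le_succ ordConnected_Icc fun i _ _ hi ↦ by
    simpa [Order.succ_eq_add_one] using P.t_le_t_succ i (by simpa using hi.2)

lemma t_mem {i : ℕ} (hi : i ≤ P.n) : P.t i ∈ Icc c d := by
  have h := P.monotoneOn_t
  constructor
  · simpa [P.t_zero] using h (by simp) ⟨i.zero_le, hi⟩ i.zero_le
  · simpa [P.t_n] using h ⟨i.zero_le, hi⟩ (by simp) hi

lemma tag_mem_Icc {i : ℕ} (hi : i < P.n) : P.tag i ∈ Icc c d :=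
  Icc_subset_Icc (P.t_mem hi.le).1 (P.t_mem hi).2 (P.tag_mem i hi)

lemma exists_t_le_lt (hm : m ∈ Ico c d) : ∃ k < P.n, P.t k ≤ m ∧ m < P.t (k + 1) := by
  have hex : ∃ j, m < P.t j := ⟨P.n, P.t_n.symm ▸ hm.2⟩
  obtain ⟨k, hk⟩ : ∃ k, Nat.find hex = k + 1 :=
    Nat.exists_eq_add_one_of_ne_zero fun h ↦ by
      have := Nat.find_spec hex
      rw [h, P.t_zero] at this
      exact this.not_ge hm.1
  refine ⟨k, ?_, not_lt.1 (Nat.find_min hex (by omega)), hk ▸ Nat.find_spec hex⟩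
  by_contra! hnk
  exact Nat.find_min hex (by omega : P.n < Nat.find hex) (P.t_n.symm ▸ hm.2)

variable {k : ℕ}

def splitLeft (hk : k < P.n) (hkm : P.t k ≤ m) : TaggedPartition c m where
  n := k + 1
  t i := if i ≤ k then P.t i else m
  tag i := if i < k then P.tag i else min (P.tag k) m
  t_zero := by simp [P.t_zero]
  t_n := by simp
  t_le_t_succ i hi := by
    rcases Nat.lt_succ_iff_lt_or_eq.1 hi with hi | rfl
    · simpa [hi.le, Nat.succ_le_of_lt hi] using P.t_le_t_succ i (hi.trans hk)
    · simpa using hkm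
  tag_mem i hi := by
    rcases Nat.lt_succ_iff_lt_or_eq.1 hi with hi | rfl
    · simpa [hi, hi.le, Nat.succ_le_of_lt hi] using P.tag_mem i (hi.trans hk)
    · simpa using ⟨(P.tag_mem i hk).1, hkm⟩

def splitRight (hk : k < P.n) (hmk : m ≤ P.t (k + 1)) : TaggedPartition m d where
  n := P.n - k
  t i := if i = 0 then m else P.t (k + i)
  tag i := if i = 0 then max (P.tag k) m else P.tag (k + i)
  t_zero := by simp
  t_n := by simp [show P.n - k ≠ 0 by omega, show k + (P.n - k) = P.n by omega, P.t_n]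
  t_le_t_succ i hi := by
    rcases i with _ | i
    · simpa using hmk
    · simpa [← add_assoc] using P.t_le_t_succ (k + (i + 1)) (by omega)
  tag_mem i hi := by
    rcases i with _ | i
    · simpa using ⟨(P.tag_mem k hk).2, hmk⟩
    · simpa [← add_assoc] using P.tag_mem (k + (i + 1)) (by omega)

variable {P}

lemma MeshLT.splitLeft (h : P.MeshLT δ) (hk : k < P.n) (hkm : P.t k ≤ m)
    (hmk : m ≤ P.t (k + 1)) : (P.splitLeft hk hkm).MeshLT δ := fun i hi ↦ by
  rcases Nat.lt_succ_iff_lt_or_eq.1 hi with hi | rfl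
  · simpa [TaggedPartition.splitLeft, hi.le, Nat.succ_le_of_lt hi] using h i (hi.trans hk)
  · simpa [TaggedPartition.splitLeft] using (sub_le_sub_right hmk _).trans_lt (h _ hk)

lemma MeshLT.splitRight (h : P.MeshLT δ) (hk : k < P.n) (hkm : P.t k ≤ m)
    (hmk : m ≤ P.t (k + 1)) : (P.splitRight hk hmk).MeshLT δ := fun i hi ↦ by
  rcases i with _ | i
  · simpa [TaggedPartition.splitRight] using (sub_le_sub_left hkm _).trans_lt (h k hk)
  · simpa [TaggedPartition.splitRight, ← add_assoc] using
      h (k + (i + 1)) (by simp [TaggedPartition.splitRight] at hi; omega)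

variable (P)

lemma rsSum_eq_of_lt (hk : k < P.n) : P.rsSum γ g =
    ∑ i ∈ Finset.range k, g (γ (P.tag i)) * (γ (P.t (i + 1)) - γ (P.t i)) +
      g (γ (P.tag k)) * (γ (P.t (k + 1)) - γ (P.t k)) +
      ∑ i ∈ Finset.range (P.n - k - 1),
        g (γ (P.tag (k + 1 + i))) * (γ (P.t (k + 1 + i + 1)) - γ (P.t (k + 1 + i))) := by
  rw [rsSum, show P.n = k + 1 + (P.n - k - 1) by omega, Finset.sum_range_add,
    Finset.sum_range_succ, show k + 1 + (P.n - k - 1) - k - 1 = P.n - k - 1 by omega]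

lemma rsSum_splitLeft (hk : k < P.n) (hkm : P.t k ≤ m) : (P.splitLeft hk hkm).rsSum γ g =
    ∑ i ∈ Finset.range k, g (γ (P.tag i)) * (γ (P.t (i + 1)) - γ (P.t i)) +
      g (γ (min (P.tag k) m)) * (γ m - γ (P.t k)) := by
  rw [rsSum, splitLeft, Finset.sum_range_succ]
  congr 1
  · exact Finset.sum_congr rfl fun i hi ↦ by
      have hi : i < k := Finset.mem_range.1 hi
      simp [hi, hi.le, Nat.succ_le_of_lt hi]
  · simp

lemma rsSum_splitRight (hk : k < P.n) (hmk : m ≤ P.t (k + 1)) :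
    (P.splitRight hk hmk).rsSum γ g =
    g (γ (max (P.tag k) m)) * (γ (P.t (k + 1)) - γ m) +
      ∑ i ∈ Finset.range (P.n - k - 1),
        g (γ (P.tag (k + 1 + i))) * (γ (P.t (k + 1 + i + 1)) - γ (P.t (k + 1 + i))) := by
  rw [rsSum, show (P.splitRight hk hmk).n = P.n - k - 1 + 1 by simp [splitRight]; omega,
    Finset.sum_range_succ', add_comm]
  congr 1
  exact Finset.sum_congr rfl fun i _ ↦ by
    simp [splitRight, show k + (i + 1) = k + 1 + i by omega,
      show k + (i + 1 + 1) = k + 1 + i + 1 by omega]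

lemma rsSum_sub_splitLeft_add_splitRight (hk : k < P.n) (hkm : P.t k ≤ m)
    (hmk : m ≤ P.t (k + 1)) :
    P.rsSum γ g - ((P.splitLeft hk hkm).rsSum γ g + (P.splitRight hk hmk).rsSum γ g) =
      (g (γ (P.tag k)) - g (γ (min (P.tag k) m))) * (γ m - γ (P.t k)) +
        (g (γ (P.tag k)) - g (γ (max (P.tag k) m))) * (γ (P.t (k + 1)) - γ m) := by
  rw [P.rsSum_eq_of_lt hk, rsSum_splitLeft, rsSum_splitRight]
  ring

lemma norm_rsSum_sub_splitLeft_add_splitRight_le {ω D : ℝ} (hk : k < P.n) (hkm : P.t k ≤ m)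
    (hmk : m ≤ P.t (k + 1))
    (hω : ∀ x ∈ Icc (P.t k) (P.t (k + 1)), ‖g (γ (P.tag k)) - g (γ x)‖ ≤ ω)
    (hD : ∀ x ∈ Icc c d, ∀ y ∈ Icc c d, ‖γ x - γ y‖ ≤ D) :
    ‖P.rsSum γ g - ((P.splitLeft hk hkm).rsSum γ g + (P.splitRight hk hmk).rsSum γ g)‖ ≤
      2 * ω * D := by
  have hs := P.tag_mem k hk
  have hω₀ : 0 ≤ ω := by simpa using hω _ hs
  have hu := P.t_mem hk.le
  have hv := P.t_mem hk
  have hm : m ∈ Icc c d := ⟨hu.1.trans hkm, hmk.trans hv.2⟩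
  rw [P.rsSum_sub_splitLeft_add_splitRight hk hkm hmk, two_mul, add_mul]
  refine (norm_add_le _ _).trans (add_le_add ?_ ?_) <;> rw [norm_mul]
  · exact mul_le_mul (hω _ ⟨le_min hs.1 hkm, (min_le_left _ _).trans hs.2⟩) (hD _ hm _ hu)
      (norm_nonneg _) hω₀
  · exact mul_le_mul (hω _ ⟨hs.1.trans (le_max_left _ _), max_le hs.2 hmk⟩) (hD _ hv _ hm)
      (norm_nonneg _) hω₀

lemma sum_norm_sub_le_eVariationOn (hV : BoundedVariationOn γ (Icc c d)) :
    ∑ i ∈ Finset.range P.n, ‖γ (P.t (i + 1)) - γ (P.t i)‖ ≤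
      (eVariationOn γ (Icc c d)).toReal := by
  have h := eVariationOn.sum_le_of_monotoneOn_Icc (f := γ) (P.monotoneOn_t)
    fun i hi ↦ P.t_mem hi.2
  rw [← Finset.range_eq_Ico] at h
  simp_rw [← dist_eq_norm, dist_edist]
  rw [← ENNReal.toReal_sum fun _ _ ↦ edist_ne_top _ _]
  exact ENNReal.toReal_mono hV h

lemma norm_rsSum_le {G : ℝ} (hG : ∀ t ∈ Icc c d, ‖g (γ t)‖ ≤ G)
    (hV : BoundedVariationOn γ (Icc c d)) :
    ‖P.rsSum γ g‖ ≤ G * (eVariationOn γ (Icc c d)).toReal := by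
  have hG₀ : 0 ≤ G := (norm_nonneg _).trans (hG _ (P.t_mem (Nat.zero_le _)))
  calc ‖P.rsSum γ g‖
      ≤ ∑ i ∈ Finset.range P.n, G * ‖γ (P.t (i + 1)) - γ (P.t i)‖ := by
        refine (norm_sum_le _ _).trans (Finset.sum_le_sum fun i hi ↦ ?_)
        rw [norm_mul]
        exact mul_le_mul_of_nonneg_right
          (hG _ (P.tag_mem_Icc (Finset.mem_range.1 hi))) (norm_nonneg _)
    _ ≤ G * (eVariationOn γ (Icc c d)).toReal := by
        rw [← Finset.mul_sum]
        exact mul_le_mul_of_nonneg_left (P.sum_norm_sub_le_eVariationOn hV) hG₀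

end TaggedPartition

lemma isRSIntegral_iff_s11 {γ : ℝ → ℂ} {c d : ℝ} {g : ℂ → ℂ} {I : ℂ} :
    IsRSIntegral γ c d g I ↔ ∀ ε > 0, ∃ δ > 0, ∀ P : TaggedPartition c d, P.MeshLT δ →
      ‖P.rsSum γ g - I‖ < ε := by
  refine forall₂_congr fun ε _ ↦ exists_congr fun δ ↦ and_congr_right fun _ ↦ ⟨?_, ?_⟩
  · intro h P hP
    exact h P.n P.t P.tag P.t_zero P.t_n P.t_le_t_succ hP P.tag_mem
  · intro h n t s h0 hn hmono hmesh htag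
    exact h ⟨n, t, s, h0, hn, hmono, htag⟩ hmesh

section RiemannStieltjes

variable {γ : ℝ → ℂ} {g : ℂ → ℂ} {c d : ℝ}

lemma exists_pos_forall_split_rsSum_near (hγ : ContinuousOn γ (Icc c d))
    (hgγ : ContinuousOn (fun t ↦ g (γ t)) (Icc c d)) {ε : ℝ} (hε : 0 < ε) :
    ∃ η > 0, ∀ m ∈ Ico c d, ∀ δ ≤ η, ∀ P : TaggedPartition c d, P.MeshLT δ →
      ∃ (P₁ : TaggedPartition c m) (P₂ : TaggedPartition m d), P₁.MeshLT δ ∧ P₂.MeshLT δ ∧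
        ‖P.rsSum γ g - (P₁.rsSum γ g + P₂.rsSum γ g)‖ < ε := by
  obtain ⟨C, hC₀, hC⟩ := (isCompact_Icc.image_of_continuousOn hγ).isBounded.exists_pos_norm_le
  have hγ₂ : ∀ x ∈ Icc c d, ∀ y ∈ Icc c d, ‖γ x - γ y‖ ≤ 2 * C := fun x hx y hy ↦
    (norm_sub_le _ _).trans <| by
      linarith [hC _ (mem_image_of_mem γ hx), hC _ (mem_image_of_mem γ hy)]
  set ω := ε / (8 * C)
  obtain ⟨η, hη, hUC⟩ := Metric.uniformContinuousOn_iff.1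
    (isCompact_Icc.uniformContinuousOn_of_continuous hgγ) ω (by positivity)
  refine ⟨η, hη, fun m hm δ hδη P hP ↦ ?_⟩
  obtain ⟨k, hk, hkm, hmk⟩ := P.exists_t_le_lt hm
  refine ⟨P.splitLeft hk hkm, P.splitRight hk hmk.le, hP.splitLeft hk hkm hmk.le,
    hP.splitRight hk hkm hmk.le, ?_⟩
  refine lt_of_le_of_lt (P.norm_rsSum_sub_splitLeft_add_splitRight_le (ω := ω) hk hkm hmk.le
    (fun x hx ↦ ?_) hγ₂) ?_
  · have hs := P.tag_mem k hk
    have hsub := Icc_subset_Icc (P.t_mem hk.le).1 (P.t_mem hk).2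
    rw [← dist_eq_norm]
    refine (hUC _ (hsub hs) _ (hsub hx) ?_).le
    rw [Real.dist_eq, abs_sub_lt_iff]
    have := hP k hk
    constructor <;> linarith [hs.1, hs.2, hx.1, hx.2]
  · have : 2 * ω * (2 * C) = ε / 2 := by
      simp only [ω]
      field_simp
      ring
    linarith

lemma isRSIntegral_of_forall_exists_split (hγ : ContinuousOn γ (Icc c d))
    (hgγ : ContinuousOn (fun t ↦ g (γ t)) (Icc c d)) {I : ℂ}
    (h : ∀ ε > 0, ∃ m ∈ Ico c d, ∃ δ > 0, ∃ I₁ I₂ : ℂ, ‖I₁ + I₂ - I‖ < ε ∧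
      (∀ P : TaggedPartition c m, P.MeshLT δ → ‖P.rsSum γ g - I₁‖ < ε) ∧
      (∀ P : TaggedPartition m d, P.MeshLT δ → ‖P.rsSum γ g - I₂‖ < ε)) :
    IsRSIntegral γ c d g I := by
  refine isRSIntegral_iff_s11.2 fun ε hε ↦ ?_
  obtain ⟨η, hη, hsplit⟩ := exists_pos_forall_split_rsSum_near hγ hgγ (by positivity : 0 < ε / 4)
  obtain ⟨m, hm, δ, hδ, I₁, I₂, hI, h₁, h₂⟩ := h (ε / 4) (by positivity)
  refine ⟨min δ η, lt_min hδ hη, fun P hP ↦ ?_⟩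
  obtain ⟨P₁, P₂, hP₁, hP₂, hP⟩ := hsplit m hm _ (min_le_right _ _) P hP
  calc ‖P.rsSum γ g - I‖
      = ‖(P.rsSum γ g - (P₁.rsSum γ g + P₂.rsSum γ g)) + (P₁.rsSum γ g - I₁) +
          (P₂.rsSum γ g - I₂) + (I₁ + I₂ - I)‖ := by ring_nf
    _ ≤ _ := norm_add₄_le
    _ < ε / 4 + ε / 4 + ε / 4 + ε / 4 := by
        gcongr
        · exact h₁ P₁ (hP₁.mono (min_le_left _ _))
        · exact h₂ P₂ (hP₂.mono (min_le_left _ _))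
    _ = ε := by ring

lemma IsRSIntegral.add_adjacent_s11 {m : ℝ} {I₁ I₂ : ℂ} (h₁ : IsRSIntegral γ c m g I₁)
    (h₂ : IsRSIntegral γ m d g I₂) (hm : m ∈ Ico c d) (hγ : ContinuousOn γ (Icc c d))
    (hgγ : ContinuousOn (fun t ↦ g (γ t)) (Icc c d)) : IsRSIntegral γ c d g (I₁ + I₂) := by
  refine isRSIntegral_of_forall_exists_split hγ hgγ fun ε hε ↦ ?_
  obtain ⟨δ₁, hδ₁, h₁⟩ := isRSIntegral_iff_s11.1 h₁ ε hε
  obtain ⟨δ₂, hδ₂, h₂⟩ := isRSIntegral_iff_s11.1 h₂ ε hε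
  exact ⟨m, hm, min δ₁ δ₂, lt_min hδ₁ hδ₂, I₁, I₂, by simpa using hε,
    fun P hP ↦ h₁ P (hP.mono (min_le_left _ _)), fun P hP ↦ h₂ P (hP.mono (min_le_right _ _))⟩

lemma eventually_norm_rsSum_lt_left {x : ℝ} (hγ : ContinuousWithinAt γ (Icc c x) x)
    (hgγ : ContinuousOn (fun t ↦ g (γ t)) (Icc c x)) (hV : BoundedVariationOn γ (Icc c x))
    {ε : ℝ} (hε : 0 < ε) :
    ∀ᶠ y in 𝓝[Icc c x] x, ∀ P : TaggedPartition y x, ‖P.rsSum γ g‖ < ε := by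
  obtain ⟨G, hG⟩ := isCompact_Icc.exists_bound_of_continuousOn hgγ
  have hvar : Tendsto (fun y ↦ G * (eVariationOn γ (Icc c x ∩ Icc y x)).toReal)
      (𝓝[Icc c x] x) (𝓝 0) := by
    simpa using ((ENNReal.tendsto_toReal ENNReal.zero_ne_top).comp
      (hV.tendsto_eVariationOn_Icc_zero_left (hγ.mono inter_subset_left))).const_mul G
  filter_upwards [hvar.eventually (gt_mem_nhds hε), self_mem_nhdsWithin] with y hy hyI P
  rw [Icc_inter_Icc, max_eq_right hyI.1, min_self] at hy
  have hsub : Icc y x ⊆ Icc c x := Icc_subset_Icc hyI.1 le_rfl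
  exact (P.norm_rsSum_le (fun t ht ↦ hG t (hsub ht)) (hV.mono hsub)).trans_lt hy

lemma eventually_norm_rsSum_lt_right {x : ℝ} (hγ : ContinuousWithinAt γ (Icc c x) c)
    (hgγ : ContinuousOn (fun t ↦ g (γ t)) (Icc c x)) (hV : BoundedVariationOn γ (Icc c x))
    {ε : ℝ} (hε : 0 < ε) :
    ∀ᶠ y in 𝓝[Icc c x] c, ∀ P : TaggedPartition c y, ‖P.rsSum γ g‖ < ε := by
  obtain ⟨G, hG⟩ := isCompact_Icc.exists_bound_of_continuousOn hgγ
  have hvar : Tendsto (fun y ↦ G * (eVariationOn γ (Icc c x ∩ Icc c y)).toReal)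
      (𝓝[Icc c x] c) (𝓝 0) := by
    simpa using ((ENNReal.tendsto_toReal ENNReal.zero_ne_top).comp
      (hV.tendsto_eVariationOn_Icc_zero_right c (hγ.mono inter_subset_left))).const_mul G
  filter_upwards [hvar.eventually (gt_mem_nhds hε), self_mem_nhdsWithin] with y hy hyI P
  rw [Icc_inter_Icc, max_self, min_eq_right hyI.2] at hy
  have hsub : Icc c y ⊆ Icc c x := Icc_subset_Icc le_rfl hyI.2
  exact (P.norm_rsSum_le (fun t ht ↦ hG t (hsub ht)) (hV.mono hsub)).trans_lt hy

lemma isRSIntegral_sub_of_forall_lt {x : ℝ} {F : ℝ → ℂ} (hcx : c < x)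
    (hγ : ContinuousOn γ (Icc c x)) (hgγ : ContinuousOn (fun t ↦ g (γ t)) (Icc c x))
    (hV : BoundedVariationOn γ (Icc c x)) (hF : ContinuousWithinAt F (Icc c x) x)
    (h : ∀ y ∈ Ioo c x, IsRSIntegral γ c y g (F y - F c)) :
    IsRSIntegral γ c x g (F x - F c) := by
  refine isRSIntegral_of_forall_exists_split hγ hgγ fun ε hε ↦ ?_
  have hle : 𝓝[<] x ≤ 𝓝[Icc c x] x :=
    nhdsWithin_le_of_mem (mem_of_superset (Ioo_mem_nhdsLT hcx) Ioo_subset_Icc_self)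
  obtain ⟨y, hy, hsmall, hFy⟩ := (Filter.Eventually.and (Ioo_mem_nhdsLT hcx) <| hle <|
    (eventually_norm_rsSum_lt_left (hγ x (right_mem_Icc.2 hcx.le)) hgγ hV hε).and
      (Metric.tendsto_nhds.1 hF ε hε)).exists
  obtain ⟨δ, hδ, h₁⟩ := isRSIntegral_iff_s11.1 (h y hy) ε hε
  refine ⟨y, ⟨hy.1.le, hy.2⟩, δ, hδ, F y - F c, 0, ?_, h₁, fun P _ ↦ by simpa using hsmall P⟩
  rwa [add_zero, sub_sub_sub_cancel_right, ← dist_eq_norm]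

lemma isRSIntegral_sub_of_forall_gt {x : ℝ} {F : ℝ → ℂ} (hcx : c < x)
    (hγ : ContinuousOn γ (Icc c x)) (hgγ : ContinuousOn (fun t ↦ g (γ t)) (Icc c x))
    (hV : BoundedVariationOn γ (Icc c x)) (hF : ContinuousWithinAt F (Icc c x) c)
    (h : ∀ y ∈ Ioo c x, IsRSIntegral γ y x g (F x - F y)) :
    IsRSIntegral γ c x g (F x - F c) := by
  refine isRSIntegral_of_forall_exists_split hγ hgγ fun ε hε ↦ ?_
  have hle : 𝓝[>] c ≤ 𝓝[Icc c x] c :=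
    nhdsWithin_le_of_mem (mem_of_superset (Ioo_mem_nhdsGT hcx) Ioo_subset_Icc_self)
  obtain ⟨y, hy, hsmall, hFy⟩ := (Filter.Eventually.and (Ioo_mem_nhdsGT hcx) <| hle <|
    (eventually_norm_rsSum_lt_right (hγ c (left_mem_Icc.2 hcx.le)) hgγ hV hε).and
      (Metric.tendsto_nhds.1 hF ε hε)).exists
  obtain ⟨δ, hδ, h₂⟩ := isRSIntegral_iff_s11.1 (h y hy) ε hε
  refine ⟨y, ⟨hy.1.le, hy.2⟩, δ, hδ, 0, F x - F y, ?_, fun P _ ↦ by simpa using hsmall P, h₂⟩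
  rwa [zero_add, sub_sub_sub_cancel_left, ← dist_eq_norm, dist_comm]

end RiemannStieltjes

-- The last clause of `GoodInterval`, with `f ∘ Γ` generalised to any `F`.
def IsPrimitiveOn (γ : ℝ → ℂ) (g : ℂ → ℂ) (F : ℝ → ℂ) (c d : ℝ) : Prop :=
  ∀ c' d', c ≤ c' → c' < d' → d' ≤ d → IsRSIntegral γ c' d' g (F d' - F c')

section IsPrimitiveOn

variable {γ : ℝ → ℂ} {g : ℂ → ℂ} {F : ℝ → ℂ} {c d : ℝ}

lemma IsPrimitiveOn.mono {c' d' : ℝ} (h : IsPrimitiveOn γ g F c d) (hc : c ≤ c') (hd : d' ≤ d) :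
    IsPrimitiveOn γ g F c' d' :=
  fun _ _ h₁ h₂ h₃ ↦ h _ _ (hc.trans h₁) h₂ (h₃.trans hd)

lemma IsPrimitiveOn.trans {m : ℝ} (h₁ : IsPrimitiveOn γ g F c m) (h₂ : IsPrimitiveOn γ g F m d)
    (hγ : ContinuousOn γ (Icc c d)) (hgγ : ContinuousOn (fun t ↦ g (γ t)) (Icc c d)) :
    IsPrimitiveOn γ g F c d := by
  intro c' d' hcc' hc'd' hd'd
  rcases le_or_gt d' m with hd'm | hmd'
  · exact h₁ c' d' hcc' hc'd' hd'm
  rcases le_or_gt m c' with hmc' | hc'm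
  · exact h₂ c' d' hmc' hc'd' hd'd
  have hsub : Icc c' d' ⊆ Icc c d := Icc_subset_Icc hcc' hd'd
  simpa using (h₁ c' m hcc' hc'm le_rfl).add_adjacent_s11 (h₂ m d' le_rfl hmd' hd'd)
    ⟨hc'm.le, hmd'⟩ (hγ.mono hsub) (hgγ.mono hsub)

lemma isPrimitiveOn_of_forall_lt {x : ℝ} (hγ : ContinuousOn γ (Icc c x))
    (hgγ : ContinuousOn (fun t ↦ g (γ t)) (Icc c x)) (hV : BoundedVariationOn γ (Icc c x))
    (hF : ContinuousWithinAt F (Icc c x) x) (h : ∀ y ∈ Ioo c x, IsPrimitiveOn γ g F c y) :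
    IsPrimitiveOn γ g F c x := by
  intro c' d' hcc' hc'd' hd'x
  obtain hd'x | rfl := hd'x.lt_or_eq
  · exact h d' ⟨hcc'.trans_lt hc'd', hd'x⟩ c' d' hcc' hc'd' le_rfl
  have hsub : Icc c' d' ⊆ Icc c d' := Icc_subset_Icc hcc' le_rfl
  exact isRSIntegral_sub_of_forall_lt hc'd' (hγ.mono hsub) (hgγ.mono hsub) (hV.mono hsub)
    (hF.mono hsub) fun y hy ↦ h y ⟨hcc'.trans_lt hy.1, hy.2⟩ c' y hcc' hy.1 le_rfl

lemma isPrimitiveOn_of_forall_gt {x : ℝ} (hγ : ContinuousOn γ (Icc c x))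
    (hgγ : ContinuousOn (fun t ↦ g (γ t)) (Icc c x)) (hV : BoundedVariationOn γ (Icc c x))
    (hF : ContinuousWithinAt F (Icc c x) c) (h : ∀ y ∈ Ioo c x, IsPrimitiveOn γ g F y x) :
    IsPrimitiveOn γ g F c x := by
  intro c' d' hcc' hc'd' hd'x
  obtain hcc' | rfl := hcc'.lt_or_eq
  · exact h c' ⟨hcc', hc'd'.trans_le hd'x⟩ c' d' le_rfl hc'd' hd'x
  have hsub : Icc c d' ⊆ Icc c x := Icc_subset_Icc le_rfl hd'x
  exact isRSIntegral_sub_of_forall_gt hc'd' (hγ.mono hsub) (hgγ.mono hsub) (hV.mono hsub)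
    (hF.mono hsub) fun y hy ↦ h y ⟨hy.1, hy.2.trans_le hd'x⟩ y d' le_rfl hy.2 hd'x

lemma isPrimitiveOn_of_forall_exists_nhdsWithin (hcd : c ≤ d) (hγ : ContinuousOn γ (Icc c d))
    (hgγ : ContinuousOn (fun t ↦ g (γ t)) (Icc c d))
    (h : ∀ x ∈ Icc c d, ∃ p q, IsPrimitiveOn γ g F p q ∧ Icc p q ∈ 𝓝[Icc c d] x) :
    IsPrimitiveOn γ g F c d := by
  suffices IsPrimitiveOn γ g F (min c d) (max c d) by simpa [hcd] using this
  refine isPreconnected_Icc.induction₂ (fun x y ↦ IsPrimitiveOn γ g F (min x y) (max x y))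
    (fun x hx ↦ ?_) (fun x y z hx hy hz hxy hyz ↦ ?_) (fun x y _ _ h ↦ by rwa [min_comm, max_comm])
    (left_mem_Icc.2 hcd) (right_mem_Icc.2 hcd)
  · obtain ⟨p, q, hpq, hmem⟩ := h x hx
    have hx' := mem_of_mem_nhdsWithin hx hmem
    filter_upwards [hmem] with y hy
    exact hpq.mono (le_min hx'.1 hy.1) (max_le hx'.2 hy.2)
  · -- both intervals contain `y`, so their union is glued at `y`
    have hlo : IsPrimitiveOn γ g F (min (min x y) (min y z)) y := by
      rcases min_choice (min x y) (min y z) with h | h <;> rw [h]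
      exacts [hxy.mono le_rfl (le_max_right x y), hyz.mono le_rfl (le_max_left y z)]
    have hhi : IsPrimitiveOn γ g F y (max (max x y) (max y z)) := by
      rcases max_choice (max x y) (max y z) with h | h <;> rw [h]
      exacts [hxy.mono (min_le_right x y) le_rfl, hyz.mono (min_le_left y z) le_rfl]
    have hsub : Icc (min (min x y) (min y z)) (max (max x y) (max y z)) ⊆ Icc c d :=
      Icc_subset_Icc (by simp [hx.1, hy.1, hz.1]) (by simp [hx.2, hy.2, hz.2])
    exact (hlo.trans hhi (hγ.mono hsub) (hgγ.mono hsub)).mono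
      (le_min (min_le_of_left_le (min_le_left _ _)) (min_le_of_right_le (min_le_right _ _)))
      (max_le (le_max_of_le_left (le_max_left _ _)) (le_max_of_le_right (le_max_right _ _)))

end IsPrimitiveOn

def IsGoodAt (Γ : ℝ → ℂ) (f g : ℂ → ℂ) (a b x : ℝ) : Prop :=
  ∃ J, GoodInterval Γ f g a b J ∧ J ∈ 𝓝[Icc a b] x

section GoodPoints

variable {Γ : ℝ → ℂ} {f g : ℂ → ℂ} {a b : ℝ}

lemma GoodInterval.isGoodAt {c d x : ℝ} (h : GoodInterval Γ f g a b (Icc c d))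
    (hx : x ∈ Ioo c d) : IsGoodAt Γ f g a b x :=
  ⟨_, h, mem_nhdsWithin_of_mem_nhds (Icc_mem_nhds hx.1 hx.2)⟩

lemma isClosed_setOf_not_isGoodAt : IsClosed {x | x ∈ Icc a b ∧ ¬ IsGoodAt Γ f g a b x} := by
  refine isClosed_of_closure_subset fun x hx ↦ ?_
  refine ⟨closure_minimal (fun y hy ↦ hy.1) isClosed_Icc hx, fun ⟨J, hJ, hJx⟩ ↦ ?_⟩
  have hgood : ∀ᶠ y in 𝓝[Icc a b] x, IsGoodAt Γ f g a b y :=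
    (eventually_eventually_nhdsWithin.2 hJx).mono fun y hy ↦ ⟨J, hJ, hy⟩
  exact mem_closure_iff_frequently.1 hx <| (eventually_nhdsWithin_iff.1 hgood).mono
    fun y hy hyB ↦ hyB.2 (hy hyB.1)

lemma countable_setOf_not_isGoodAt_mem_sUnion :
    {x | x ∈ ⋃₀ {J | GoodInterval Γ f g a b J} ∧ ¬ IsGoodAt Γ f g a b x}.Countable := by
  have hL : {x | ¬ IsGoodAt Γ f g a b x ∧
      ∃ d, x < d ∧ GoodInterval Γ f g a b (Icc x d)}.Countable := by
    choose! d hd using fun x (hx : ∃ d, x < d ∧ GoodInterval Γ f g a b (Icc x d)) ↦ hx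
    exact Set.countable_of_forall_notMem_Ioo_right (y := d) (fun x hx ↦ (hd x hx.2).1)
      fun x hx x' hx' hmem ↦ hx'.1 ((hd x hx.2).2.isGoodAt hmem)
  have hR : {x | ¬ IsGoodAt Γ f g a b x ∧
      ∃ c, c < x ∧ GoodInterval Γ f g a b (Icc c x)}.Countable := by
    choose! c hc using fun x (hx : ∃ c, c < x ∧ GoodInterval Γ f g a b (Icc c x)) ↦ hx
    exact Set.countable_of_forall_notMem_Ioo_left (y := c) (fun x hx ↦ (hc x hx.2).1)
      fun x hx x' hx' hmem ↦ hx'.1 ((hc x hx.2).2.isGoodAt hmem)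
  refine (hL.union hR).mono ?_
  rintro x ⟨⟨_, ⟨c, d, hac, hcd, hdb, rfl, hP⟩, hx⟩, hbad⟩
  have hJ : GoodInterval Γ f g a b (Icc c d) := ⟨c, d, hac, hcd, hdb, rfl, hP⟩
  rcases hx.1.lt_or_eq with hcx | rfl
  · rcases hx.2.lt_or_eq with hxd | rfl
    · exact absurd (hJ.isGoodAt ⟨hcx, hxd⟩) hbad
    · exact Or.inr ⟨hbad, c, hcx, hJ⟩
  · exact Or.inl ⟨hbad, d, hcd, hJ⟩

lemma isPrimitiveOn_of_forall_isGoodAt (hΓ : ContinuousOn Γ (Icc a b))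
    (hgΓ : ContinuousOn (fun t ↦ g (Γ t)) (Icc a b)) {c d : ℝ} (hac : a ≤ c) (hcd : c ≤ d)
    (hdb : d ≤ b) (h : ∀ y ∈ Icc c d, IsGoodAt Γ f g a b y) :
    IsPrimitiveOn Γ g (fun t ↦ f (Γ t)) c d := by
  have hsub : Icc c d ⊆ Icc a b := Icc_subset_Icc hac hdb
  refine isPrimitiveOn_of_forall_exists_nhdsWithin hcd (hΓ.mono hsub) (hgΓ.mono hsub)
    fun y hy ↦ ?_
  obtain ⟨_, ⟨p, q, -, -, -, rfl, hpq⟩, hJ⟩ := h y hy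
  exact ⟨p, q, hpq, nhdsWithin_mono _ hsub hJ⟩

lemma exists_isPrimitiveOn_left (hΓ : ContinuousOn Γ (Icc a b))
    (hV : BoundedVariationOn Γ (Icc a b)) (hfΓ : ContinuousOn (fun t ↦ f (Γ t)) (Icc a b))
    (hgΓ : ContinuousOn (fun t ↦ g (Γ t)) (Icc a b)) {x : ℝ} (hax : a < x) (hxb : x ≤ b)
    (h : ∀ᶠ y in 𝓝[<] x, y ∈ Icc a b → IsGoodAt Γ f g a b y) :
    ∃ c < x, a ≤ c ∧ IsPrimitiveOn Γ g (fun t ↦ f (Γ t)) c x := by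
  obtain ⟨l, hlx : l < x, hl⟩ := mem_nhdsLT_iff_exists_Ioo_subset.1 (h.and (Ioo_mem_nhdsLT hax))
  have hgood : ∀ y ∈ Ioo l x, a < y ∧ IsGoodAt Γ f g a b y := fun y hy ↦
    ⟨(hl hy).2.1, (hl hy).1 ⟨(hl hy).2.1.le, (hl hy).2.2.le.trans hxb⟩⟩
  obtain ⟨c, hc⟩ := nonempty_Ioo.2 hlx
  have hsub : Icc c x ⊆ Icc a b := Icc_subset_Icc (hgood c hc).1.le hxb
  refine ⟨c, hc.2, (hgood c hc).1.le, isPrimitiveOn_of_forall_lt (hΓ.mono hsub) (hgΓ.mono hsub)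
    (hV.mono hsub) ((hfΓ x ⟨hax.le, hxb⟩).mono hsub) fun y hy ↦ ?_⟩
  exact isPrimitiveOn_of_forall_isGoodAt hΓ hgΓ (hgood c hc).1.le hy.1.le (hy.2.le.trans hxb)
    fun z hz ↦ (hgood z ⟨hc.1.trans_le hz.1, hz.2.trans_lt hy.2⟩).2

lemma exists_isPrimitiveOn_right (hΓ : ContinuousOn Γ (Icc a b))
    (hV : BoundedVariationOn Γ (Icc a b)) (hfΓ : ContinuousOn (fun t ↦ f (Γ t)) (Icc a b))
    (hgΓ : ContinuousOn (fun t ↦ g (Γ t)) (Icc a b)) {x : ℝ} (hax : a ≤ x) (hxb : x < b)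
    (h : ∀ᶠ y in 𝓝[>] x, y ∈ Icc a b → IsGoodAt Γ f g a b y) :
    ∃ d > x, d ≤ b ∧ IsPrimitiveOn Γ g (fun t ↦ f (Γ t)) x d := by
  obtain ⟨u, hxu : x < u, hu⟩ := mem_nhdsGT_iff_exists_Ioo_subset.1 (h.and (Ioo_mem_nhdsGT hxb))
  have hgood : ∀ y ∈ Ioo x u, y < b ∧ IsGoodAt Γ f g a b y := fun y hy ↦
    ⟨(hu hy).2.2, (hu hy).1 ⟨hax.trans (hu hy).2.1.le, (hu hy).2.2.le⟩⟩
  obtain ⟨d, hd⟩ := nonempty_Ioo.2 hxu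
  have hsub : Icc x d ⊆ Icc a b := Icc_subset_Icc hax (hgood d hd).1.le
  refine ⟨d, hd.1, (hgood d hd).1.le, isPrimitiveOn_of_forall_gt (hΓ.mono hsub) (hgΓ.mono hsub)
    (hV.mono hsub) ((hfΓ x ⟨hax, hxb.le⟩).mono hsub) fun y hy ↦ ?_⟩
  exact isPrimitiveOn_of_forall_isGoodAt hΓ hgΓ (hax.trans hy.1.le) hy.2.le (hgood d hd).1.le
    fun z hz ↦ (hgood z ⟨hy.1.trans_le hz.1, hz.2.trans_lt hd.2⟩).2

lemma isGoodAt_of_eventually (hΓ : ContinuousOn Γ (Icc a b))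
    (hV : BoundedVariationOn Γ (Icc a b)) (hfΓ : ContinuousOn (fun t ↦ f (Γ t)) (Icc a b))
    (hgΓ : ContinuousOn (fun t ↦ g (Γ t)) (Icc a b)) {x : ℝ} (hab : a < b) (hx : x ∈ Icc a b)
    (h : ∀ᶠ y in 𝓝[≠] x, y ∈ Icc a b → IsGoodAt Γ f g a b y) : IsGoodAt Γ f g a b x := by
  have hleft := fun hax : a < x ↦ exists_isPrimitiveOn_left hΓ hV hfΓ hgΓ hax hx.2
    (h.filter_mono (nhdsWithin_mono _ fun _ hy ↦ ne_of_lt hy))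
  have hright := fun hxb : x < b ↦ exists_isPrimitiveOn_right hΓ hV hfΓ hgΓ hx.1 hxb
    (h.filter_mono (nhdsWithin_mono _ fun _ hy ↦ ne_of_gt hy))
  rcases hx.1.lt_or_eq with hax | rfl
  · rcases hx.2.lt_or_eq with hxb | rfl
    · obtain ⟨c, hcx, hac, hc⟩ := hleft hax
      obtain ⟨d, hxd, hdb, hd⟩ := hright hxb
      have hsub : Icc c d ⊆ Icc a b := Icc_subset_Icc hac hdb
      exact ⟨Icc c d, ⟨c, d, hac, hcx.trans hxd, hdb, rfl,
        hc.trans hd (hΓ.mono hsub) (hgΓ.mono hsub)⟩,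
        mem_nhdsWithin_of_mem_nhds (Icc_mem_nhds hcx hxd)⟩
    · obtain ⟨c, hcx, hac, hc⟩ := hleft hax
      exact ⟨Icc c x, ⟨c, x, hac, hcx, le_rfl, rfl, hc⟩,
        nhdsWithin_mono _ Icc_subset_Iic_self (Icc_mem_nhdsLE hcx)⟩
  · obtain ⟨d, hxd, hdb, hd⟩ := hright hab
    exact ⟨Icc a d, ⟨a, d, le_rfl, hxd, hdb, rfl, hd⟩,
      nhdsWithin_mono _ Icc_subset_Ici_self (Icc_mem_nhdsGE hxd)⟩

lemma perfect_setOf_not_isGoodAt (hΓ : ContinuousOn Γ (Icc a b))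
    (hV : BoundedVariationOn Γ (Icc a b)) (hfΓ : ContinuousOn (fun t ↦ f (Γ t)) (Icc a b))
    (hgΓ : ContinuousOn (fun t ↦ g (Γ t)) (Icc a b)) (hab : a < b) :
    Perfect {x | x ∈ Icc a b ∧ ¬ IsGoodAt Γ f g a b x} := by
  refine ⟨isClosed_setOf_not_isGoodAt, fun x hx ↦ by_contra fun hacc ↦ hx.2 ?_⟩
  rw [accPt_iff_frequently_nhdsNE, not_frequently] at hacc
  exact isGoodAt_of_eventually hΓ hV hfΓ hgΓ hab hx.1
    (hacc.mono fun y hy hyI ↦ by_contra fun hbad ↦ hy ⟨hyI, hbad⟩)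

end GoodPoints

/-- With `E = ⋃𝓘` the union of all good intervals, either `E = [a,b]` or
`[a,b] \ E` is uncountable. -/
theorem stmt11 (a b : ℝ) (hab : a < b) (Γ : ℝ → ℂ)
    (hΓc : ContinuousOn Γ (Set.Icc a b)) (hΓbv : BoundedVariationOn Γ (Set.Icc a b))
    (f g : ℂ → ℂ) (hf : ContinuousOn f (Γ '' Set.Icc a b))
    (hg : ContinuousOn g (Γ '' Set.Icc a b)) :
    ⋃₀ {J | GoodInterval Γ f g a b J} = Set.Icc a b ∨
      ¬ (Set.Icc a b \ ⋃₀ {J | GoodInterval Γ f g a b J}).Countable := by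
  rw [or_iff_not_imp_right, not_not]
  intro hcount
  set E := ⋃₀ {J | GoodInterval Γ f g a b J}
  set B := {x | x ∈ Icc a b ∧ ¬ IsGoodAt Γ f g a b x}
  have hE : E ⊆ Icc a b := by
    rintro x ⟨_, ⟨c, d, hac, -, hdb, rfl, -⟩, hx⟩
    exact Icc_subset_Icc hac hdb hx
  refine hE.antisymm fun x hx ↦ by_contra fun hxE ↦ ?_
  have hBne : B.Nonempty := ⟨x, hx, fun ⟨J, hJ, hJx⟩ ↦ hxE ⟨J, hJ, mem_of_mem_nhdsWithin hx hJx⟩⟩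
  have hBcount : B.Countable := (hcount.union countable_setOf_not_isGoodAt_mem_sUnion).mono
    fun y hy ↦ (em (y ∈ E)).elim (fun hyE ↦ Or.inr ⟨hyE, hy.2⟩) fun hyE ↦ Or.inl ⟨hy.1, hyE⟩
  have hBperfect : Perfect B := perfect_setOf_not_isGoodAt hΓc hΓbv
    (hf.comp hΓc (mapsTo_image _ _)) (hg.comp hΓc (mapsTo_image _ _)) hab
  exact hBperfect.not_countable hBne hBcount
end

section
/- Let F(z) = z^{1+i} on D₀, and let z, w ∈ D₀ with z in the second quadrant and w in the third quadrant. Then |F(z) − F(w)| ≥ |z| − e^{π}|z − w|. -/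
/-! Since `z ^ (1 + i) = z · z ^ i`, we have
`F z - F w = (z ^ i - w ^ i) z + w ^ i (z - w)`, and `‖z ^ i‖ = exp (-arg z)`.
In the second quadrant `arg z ≥ π/2`, so `‖z ^ i‖ ≤ exp (-π/2)`; in the third quadrant
`arg w ∈ (-π, -π/2]`, so `exp (π/2) ≤ ‖w ^ i‖ ≤ exp π`. As `exp (π/2) - exp (-π/2) ≥ 1`,
the first term has norm at least `‖z‖` and the second at most `exp π ‖z - w‖`. -/

open Complex Real

namespace Complex

lemma cpow_one_add (z : ℂ) {s : ℂ} (hs : 1 + s ≠ 0) : z ^ (1 + s) = z * z ^ s := by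
  rcases eq_or_ne z 0 with rfl | hz
  · simp [zero_cpow hs]
  · rw [cpow_add _ _ hz, cpow_one]

lemma norm_cpow_I_le (z : ℂ) : ‖z ^ I‖ ≤ Real.exp (-arg z) := by
  simpa [Real.exp_neg] using norm_cpow_le z I

lemma norm_cpow_I_of_ne_zero {z : ℂ} (hz : z ≠ 0) : ‖z ^ I‖ = Real.exp (-arg z) := by
  simp [norm_cpow_of_ne_zero hz, Real.exp_neg]

lemma norm_cpow_I_le_exp_pi (z : ℂ) : ‖z ^ I‖ ≤ Real.exp π :=
  (norm_cpow_I_le z).trans (Real.exp_le_exp.2 (by linarith [neg_pi_lt_arg z]))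

lemma norm_cpow_I_le_of_re_nonpos_of_im_nonneg {z : ℂ} (hre : z.re ≤ 0) (him : 0 ≤ z.im) :
    ‖z ^ I‖ ≤ Real.exp (-(π / 2)) := by
  rcases eq_or_ne z 0 with rfl | hz
  · simp [zero_cpow I_ne_zero, Real.exp_nonneg]
  have harg : π / 2 ≤ arg z := by
    by_contra! h
    rcases arg_lt_pi_div_two_iff.1 h with h | h | h
    · linarith
    · linarith
    · exact hz h
  rw [norm_cpow_I_of_ne_zero hz, Real.exp_le_exp]
  linarith

lemma exp_pi_div_two_le_norm_cpow_I {z : ℂ} (hre : z.re ≤ 0) (him : z.im < 0) :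
    Real.exp (π / 2) ≤ ‖z ^ I‖ := by
  have harg : arg z ≤ -(π / 2) := by
    by_contra! h
    rcases neg_pi_div_two_lt_arg_iff.1 h with h | h <;> linarith
  rw [norm_cpow_I_of_ne_zero (fun h ↦ by simp [h] at him), Real.exp_le_exp]
  linarith

lemma one_le_norm_cpow_I_sub {z w : ℂ} (hz2 : z.re ≤ 0) (hz3 : 0 ≤ z.im)
    (hw2 : w.re ≤ 0) (hw3 : w.im < 0) : 1 ≤ ‖z ^ I - w ^ I‖ := by
  have hz := norm_cpow_I_le_of_re_nonpos_of_im_nonneg hz2 hz3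
  have hw := exp_pi_div_two_le_norm_cpow_I hw2 hw3
  have h_exp_le_one : Real.exp (-(π / 2)) ≤ 1 := Real.exp_le_one_iff.2 (by linarith [pi_pos])
  have h_two_le_exp : 2 ≤ Real.exp (π / 2) := by
    linarith [Real.add_one_le_exp (1 : ℝ), Real.exp_le_exp.2 (show (1 : ℝ) ≤ π / 2 by
      linarith [pi_gt_three])]
  calc 1 ≤ ‖w ^ I‖ - ‖z ^ I‖ := by linarith
    _ ≤ ‖z ^ I - w ^ I‖ := by rw [norm_sub_rev]; exact norm_sub_norm_le _ _

end Complex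

lemma norm_sub_mul_norm_le_norm_mul_add_mul {𝕜 : Type*} [NormedDivisionRing 𝕜] {a b x y : 𝕜}
    {C : ℝ} (ha : 1 ≤ ‖a‖) (hb : ‖b‖ ≤ C) : ‖x‖ - C * ‖y‖ ≤ ‖a * x + b * y‖ :=
  calc ‖x‖ - C * ‖y‖ ≤ ‖a * x‖ - ‖b * y‖ := by
        rw [norm_mul, norm_mul]
        gcongr
        exact le_mul_of_one_le_left (norm_nonneg x) ha
    _ ≤ ‖a * x + b * y‖ := by simpa using norm_sub_norm_le (a * x) (-(b * y))

theorem stmt15_general (z w : ℂ)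
    (hz2 : z.re ≤ 0) (hz3 : 0 ≤ z.im)
    (hw2 : w.re ≤ 0) (hw3 : w.im < 0) :
    ‖z‖ - Real.exp Real.pi * ‖z - w‖ ≤
      ‖z ^ ((1 : ℂ) + Complex.I) - w ^ ((1 : ℂ) + Complex.I)‖ := by
  have h_one_add_I : (1 : ℂ) + I ≠ 0 := by simp [Complex.ext_iff]
  have h_decomp : z ^ ((1 : ℂ) + I) - w ^ ((1 : ℂ) + I) =
      (z ^ I - w ^ I) * z + w ^ I * (z - w) := by
    rw [cpow_one_add z h_one_add_I, cpow_one_add w h_one_add_I]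
    ring
  rw [h_decomp]
  exact norm_sub_mul_norm_le_norm_mul_add_mul (one_le_norm_cpow_I_sub hz2 hz3 hw2 hw3)
    (norm_cpow_I_le_exp_pi w)

/-- For `F(z) = z^{1+i}` on `D₀ = ℂ \ (−∞,0]`, if `z` lies in the second quadrant and
`w` in the third quadrant, then `|F(z) − F(w)| ≥ |z| − e^{π}|z − w|`. -/
theorem stmt15 (z w : ℂ)
    (hz : 0 < z.re ∨ z.im ≠ 0) (hz2 : z.re ≤ 0) (hz3 : 0 ≤ z.im)
    (hw : 0 < w.re ∨ w.im ≠ 0) (hw2 : w.re ≤ 0) (hw3 : w.im < 0) :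
    ‖z‖ - Real.exp Real.pi * ‖z - w‖ ≤
      ‖z ^ ((1 : ℂ) + Complex.I) - w ^ ((1 : ℂ) + Complex.I)‖ :=
  stmt15_general z w hz2 hz3 hw2 hw3
end

section
/- Let X be a connected compact plane set for which D¹(X) is complete, and let z₀ ∈ X. Then there exists C₁ > 0 such that |f|_X ≤ C₁|f'|_X for all f ∈ D¹(X) with f(z₀) = 0; consequently there exists C₂ > 0 such that |f(z₀) − f(w)| ≤ C₂|f'|_X·|z₀ − w| for all f ∈ D¹(X) and all w ∈ X. -/
/-!
Completeness of `D¹(X)` makes the graph `{(f, f')}` a closed, hence Banach, subspace of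
`C(X) × C(X)`, and Banach–Steinhaus applied to the difference quotients at `z` gives
`|f(z) - f(w)| ≤ A_z (|f|_X + |f'|_X) |z - w|`. Applied to the powers `fⁿ` of a function with
`f' = 0`, this makes the set where `|f|` attains its maximum open, so on connected `X` such an `f`
is constant.

If the first inequality failed, there would be `fₙ` with `fₙ(z₀) = 0`, `|fₙ|_X = 1` and
`|fₙ'|_X → 0`. The pointwise estimate makes them equicontinuous, so by Arzelà–Ascoli a subsequence
converges uniformly to some `h` with `(h, 0)` in the closed graph. Then `h` is constant and
vanishes at `z₀`, contradicting `|h|_X = 1`. The second inequality is the pointwise estimate at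
`z₀` applied to `f - f(z₀)`.
-/

open Complex Set

/-- The normed algebra `(D¹(X), ‖·‖)` is complete: every Cauchy sequence in `D¹(X)`
converges in the norm to an element of `D¹(X)`. -/
def D1Complete (X : Set ℂ) : Prop :=
  ∀ f g : ℕ → ℂ → ℂ, (∀ n, HasD1 X (f n) (g n)) →
    (∀ ε > (0:ℝ), ∃ N, ∀ m ≥ N, ∀ n ≥ N,
      DNorm X (fun z => f m z - f n z) (fun z => g m z - g n z) < ε) →
    ∃ f₀ g₀ : ℂ → ℂ, HasD1 X f₀ g₀ ∧
      Filter.Tendsto (fun n => DNorm X (fun z => f n z - f₀ z) (fun z => g n z - g₀ z))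
        Filter.atTop (nhds 0)

open Filter Topology

section General

theorem HasDerivWithinAt.exists_norm_sub_le {𝕜 E : Type*} [NontriviallyNormedField 𝕜]
    [NormedAddCommGroup E] [NormedSpace 𝕜 E] {f : 𝕜 → E} {f' : E} {s : Set 𝕜} {z : 𝕜}
    (hf : HasDerivWithinAt f f' s z) (hz : z ∈ s) {M : ℝ} (hM : ∀ w ∈ s, ‖f w‖ ≤ M) :
    ∃ C ≥ 0, ∀ w ∈ s, ‖f z - f w‖ ≤ C * ‖z - w‖ := by
  obtain ⟨c, hc⟩ := (HasFDerivWithinAt.isBigO_sub hf).bound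
  obtain ⟨δ, hδ, hball⟩ := Metric.mem_nhdsWithin_iff.mp hc
  have hM₀ : 0 ≤ M := (norm_nonneg _).trans (hM z hz)
  refine ⟨max c (2 * M / δ), le_max_of_le_right (by positivity), fun w hw => ?_⟩
  rw [norm_sub_rev, norm_sub_rev z]
  rcases lt_or_ge (dist w z) δ with hlt | hge
  · exact (hball ⟨hlt, hw⟩).trans (by gcongr; exact le_max_left _ _)
  · rw [dist_eq_norm] at hge
    calc ‖f w - f z‖ ≤ 2 * M := (norm_sub_le _ _).trans (by linarith [hM z hz, hM w hw])
      _ = 2 * M / δ * δ := by field_simp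
      _ ≤ max c (2 * M / δ) * ‖w - z‖ := by gcongr; exact le_max_right _ _

theorem equicontinuous_of_forall_dist_le {ι α β : Type*} [PseudoMetricSpace α]
    [PseudoMetricSpace β] {F : ι → α → β}
    (h : ∀ x, ∃ A, ∀ i y, dist (F i x) (F i y) ≤ A * dist x y) : Equicontinuous F := fun x => by
  obtain ⟨A, hA⟩ := h x
  refine Metric.equicontinuousAt_of_continuity_modulus (fun y => A * dist x y) ?_ F
    (Eventually.of_forall fun y i => hA i y)
  simpa using ((continuous_const.dist continuous_id : Continuous (dist x ·)).tendsto x).const_mul A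

theorem ContinuousMap.exists_strictMono_tendsto_of_equicontinuous {α β : Type*}
    [TopologicalSpace α] [CompactSpace α] [MetricSpace β] {F : ℕ → C(α, β)} {s : Set β}
    (hs : IsCompact s) (hFs : ∀ n x, F n x ∈ s) (hF : Equicontinuous fun n => ⇑(F n)) :
    ∃ (H : C(α, β)) (φ : ℕ → ℕ), StrictMono φ ∧ Tendsto (F ∘ φ) atTop (𝓝 H) := by
  let e := ContinuousMap.isometryEquivBoundedOfCompact α β
  have hcpt := BoundedContinuousFunction.arzela_ascoli s hs (range (e ∘ F))
    (by rintro _ x ⟨n, rfl⟩; exact hFs n x)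
    (fun x => by simpa [EquicontinuousAt, forall_subtype_range_iff, e] using hF x)
  obtain ⟨H, -, φ, hφ, hlim⟩ := hcpt.tendsto_subseq fun n => subset_closure (mem_range_self n)
  exact ⟨e.symm H, φ, hφ, (e.symm.continuous.tendsto H).comp hlim⟩

theorem norm_eq_of_norm_pow_sub_le {𝕜 Y : Type*} [NormedDivisionRing 𝕜] [PseudoMetricSpace Y]
    [ConnectedSpace Y] {f : Y → 𝕜} (hf : Continuous f) {M : ℝ} (hM : ∀ y, ‖f y‖ ≤ M)
    {y₀ : Y} (hy₀ : ‖f y₀‖ = M)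
    (hpow : ∀ x, ∃ A, ∀ (n : ℕ) y, ‖f x ^ n - f y ^ n‖ ≤ A * M ^ n * dist x y) (y : Y) :
    ‖f y‖ = M := by
  have hopen : IsOpen {y | ‖f y‖ = M} := by
    refine isOpen_iff_mem_nhds.2 fun x (hx : ‖f x‖ = M) => ?_
    obtain ⟨A, hA⟩ := hpow x
    have hnear : ∀ᶠ y in 𝓝 x, A * dist x y < 1 / 2 := by
      have : Tendsto (fun y => A * dist x y) (𝓝 x) (𝓝 0) := by
        simpa using ((continuous_const.dist continuous_id : Continuous (dist x ·)).tendsto x).const_mul A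
      exact this.eventually (gt_mem_nhds (by norm_num))
    filter_upwards [hnear] with y hy
    refine le_antisymm (hM y) (le_of_not_gt fun hlt => ?_)
    have hM₀ : 0 < M := (norm_nonneg _).trans_lt hlt
    -- `|f|ⁿ` keeps half its maximal value near `x` for every `n`, which fails once `|f y| < M`.
    have hhalf : ∀ n : ℕ, M ^ n / 2 ≤ ‖f y‖ ^ n := fun n => by
      have h₁ : M ^ n - ‖f y‖ ^ n ≤ ‖f x ^ n - f y ^ n‖ := by
        simpa [norm_pow, hx] using norm_sub_norm_le (f x ^ n) (f y ^ n)
      nlinarith [hA n y, mul_lt_mul_of_pos_left hy (pow_pos hM₀ n)]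
    have hsmall := (tendsto_pow_atTop_nhds_zero_of_lt_one (by positivity)
      ((div_lt_one hM₀).2 hlt)).eventually (gt_mem_nhds (by norm_num : (0 : ℝ) < 1 / 2))
    obtain ⟨n, hn⟩ := hsmall.exists
    rw [div_pow, div_lt_iff₀ (pow_pos hM₀ n)] at hn
    linarith [hhalf n]
  have hclopen : IsClopen {y | ‖f y‖ = M} := ⟨isClosed_eq hf.norm continuous_const, hopen⟩
  exact eq_univ_iff_forall.1 (hclopen.eq_univ ⟨y₀, hy₀⟩) y

end General

section D1

variable {X : Set ℂ} {f f' g g' : ℂ → ℂ}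

theorem HasD1.continuousOn (h : HasD1 X f f') : ContinuousOn f X :=
  fun z hz => (h.1 z hz).continuousWithinAt

theorem hasD1_const (X : Set ℂ) (c : ℂ) : HasD1 X (fun _ => c) 0 :=
  ⟨fun z _ => hasDerivWithinAt_const z X c, continuousOn_const⟩

theorem HasD1.add (hf : HasD1 X f f') (hg : HasD1 X g g') : HasD1 X (f + g) (f' + g') :=
  ⟨fun z hz => (hf.1 z hz).add (hg.1 z hz), hf.2.add hg.2⟩

theorem HasD1.const_smul (hf : HasD1 X f f') (c : ℂ) : HasD1 X (c • f) (c • f') :=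
  ⟨fun z hz => (hf.1 z hz).const_smul c, hf.2.const_smul c⟩

theorem HasD1.sub_const (hf : HasD1 X f f') (c : ℂ) : HasD1 X (fun z => f z - c) f' :=
  ⟨fun z hz => (hf.1 z hz).sub_const c, hf.2⟩

theorem unifNorm_eq_norm [CompactSpace X] {F : C(X, ℂ)} (hF : ∀ x : X, F x = f x) :
    UnifNorm X f = ‖F‖ := by
  rw [UnifNorm, ContinuousMap.norm_eq_iSup_norm, iSup, image_eq_range]
  simp only [hF]

/-- `D¹(X)` realised inside `C(X) × C(X)` as the graph of differentiation. -/
def derivGraph (X : Set ℂ) : Submodule ℂ (C(X, ℂ) × C(X, ℂ)) where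
  carrier := {p | ∃ f f' : ℂ → ℂ, HasD1 X f f' ∧ (∀ x : X, p.1 x = f x) ∧ ∀ x : X, p.2 x = f' x}
  add_mem' := by
    rintro p q ⟨f, f', hf, hp₁, hp₂⟩ ⟨g, g', hg, hq₁, hq₂⟩
    exact ⟨f + g, f' + g', hf.add hg, fun x => by simp [hp₁, hq₁], fun x => by simp [hp₂, hq₂]⟩
  zero_mem' := ⟨0, 0, hasD1_const X 0, fun _ => rfl, fun _ => rfl⟩
  smul_mem' := by
    rintro c p ⟨f, f', hf, hp₁, hp₂⟩
    exact ⟨c • f, c • f', hf.const_smul c, fun x => by simp [hp₁], fun x => by simp [hp₂]⟩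

theorem HasD1.exists_mem_derivGraph (h : HasD1 X f f') :
    ∃ p ∈ derivGraph X, (∀ x : X, p.1 x = f x) ∧ ∀ x : X, p.2 x = f' x :=
  ⟨(⟨X.domRestrict f, h.continuousOn.domRestrict⟩, ⟨X.domRestrict f', h.2.domRestrict⟩),
    ⟨f, f', h, fun _ => rfl, fun _ => rfl⟩, fun _ => rfl, fun _ => rfl⟩

theorem const_mem_derivGraph (c : ℂ) : (ContinuousMap.const X c, 0) ∈ derivGraph X :=
  ⟨fun _ => c, 0, hasD1_const X c, fun _ => rfl, fun _ => rfl⟩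

theorem pow_mem_derivGraph {F : C(X, ℂ)} (hF : (F, 0) ∈ derivGraph X) (n : ℕ) :
    (F ^ n, 0) ∈ derivGraph X := by
  obtain ⟨f, f', hf, hF₁, hF₂⟩ := hF
  refine ⟨f ^ n, 0, ⟨fun z hz => ?_, continuousOn_const⟩, fun x => by simp [hF₁], fun _ => rfl⟩
  simpa [← hF₂ ⟨z, hz⟩] using (hf.1 z hz).pow n

end D1

section Complete

variable {X : Set ℂ} [CompactSpace X]

theorem isClosed_derivGraph (hcomp : D1Complete X) :
    IsClosed (derivGraph X : Set (C(X, ℂ) × C(X, ℂ))) := by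
  refine IsSeqClosed.isClosed fun u p hu hup => ?_
  choose f f' hf hu₁ hu₂ using hu
  have hdist : ∀ m n, DNorm X (fun z => f m z - f n z) (fun z => f' m z - f' n z) ≤
      2 * dist (u m) (u n) := fun m n => by
    rw [DNorm, unifNorm_eq_norm (F := (u m - u n).1) (fun x => by simp [hu₁]),
      unifNorm_eq_norm (F := (u m - u n).2) (fun x => by simp [hu₂]), dist_eq_norm]
    linarith [norm_fst_le (u m - u n), norm_snd_le (u m - u n)]
  obtain ⟨f₀, f₀', hf₀, hlim⟩ := hcomp f f' hf fun ε hε => by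
    obtain ⟨N, hN⟩ := Metric.cauchySeq_iff.1 hup.cauchySeq (ε / 2) (half_pos hε)
    exact ⟨N, fun m hm n hn => (hdist m n).trans_lt (by linarith [hN m hm n hn])⟩
  let p₀ : C(X, ℂ) × C(X, ℂ) :=
    (⟨X.domRestrict f₀, hf₀.continuousOn.domRestrict⟩, ⟨X.domRestrict f₀', hf₀.2.domRestrict⟩)
  have hup₀ : Tendsto u atTop (𝓝 p₀) := by
    refine tendsto_iff_norm_sub_tendsto_zero.2
      (squeeze_zero (fun _ => norm_nonneg _) (fun n => ?_) hlim)
    rw [DNorm, unifNorm_eq_norm (F := (u n - p₀).1) (fun x => by simp [hu₁, p₀]),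
      unifNorm_eq_norm (F := (u n - p₀).2) (fun x => by simp [hu₂, p₀]), Prod.norm_def]
    exact max_le_add_of_nonneg (norm_nonneg _) (norm_nonneg _)
  rw [tendsto_nhds_unique hup hup₀]
  exact ⟨f₀, f₀', hf₀, fun _ => rfl, fun _ => rfl⟩

theorem exists_norm_sub_le_mul_norm_of_mem_derivGraph (hcomp : D1Complete X) (z : X) :
    ∃ A > 0, ∀ p ∈ derivGraph X, ∀ w : X, ‖p.1 z - p.1 w‖ ≤ A * ‖p‖ * dist z w := by
  have : CompleteSpace (derivGraph X) := (isClosed_derivGraph hcomp).completeSpace_coe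
  -- Difference quotients at `z`; for `w = z` the junk value `0⁻¹ = 0` gives the zero functional.
  let φ : X → derivGraph X →L[ℂ] ℂ := fun w => ((z : ℂ) - w)⁻¹ •
    (ContinuousMap.evalCLM ℂ z - ContinuousMap.evalCLM ℂ w) ∘L
      ContinuousLinearMap.fst ℂ _ _ ∘L (derivGraph X).subtypeL
  have hφ : ∀ (p : derivGraph X) w,
      ‖φ w p‖ = ‖(z : ℂ) - w‖⁻¹ * ‖(p : C(X, ℂ) × C(X, ℂ)).1 z - (p : C(X, ℂ) × C(X, ℂ)).1 w‖ :=
    fun p w => by simp [φ]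
  have hbdd : ∀ p : derivGraph X, ∃ C, ∀ w, ‖φ w p‖ ≤ C := by
    rintro ⟨p, f, f', hf, hp₁, -⟩
    obtain ⟨C, hC₀, hC⟩ := (hf.1 z z.2).exists_norm_sub_le z.2 (M := ‖p.1‖)
      fun w hw => hp₁ ⟨w, hw⟩ ▸ p.1.norm_coe_le_norm _
    refine ⟨C, fun w => ?_⟩
    rw [hφ, hp₁, hp₁]
    exact inv_mul_le_of_le_mul₀ (norm_nonneg _) hC₀ (by rw [mul_comm]; exact hC w w.2)
  obtain ⟨C', hC'⟩ := banach_steinhaus hbdd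
  refine ⟨max C' 1, by positivity, fun p hp w => ?_⟩
  have h := ((φ w).le_opNorm ⟨p, hp⟩).trans
    (mul_le_mul_of_nonneg_right ((hC' w).trans (le_max_left C' 1)) (norm_nonneg _))
  rw [hφ] at h
  rw [Subtype.dist_eq, dist_eq_norm]
  rcases eq_or_ne w z with rfl | hw
  · simp
  · have hzw : 0 < ‖(z : ℂ) - w‖ := norm_pos_iff.2 (sub_ne_zero.2 (Subtype.coe_ne_coe.2 hw.symm))
    rw [inv_mul_le_iff₀ hzw] at h
    calc ‖p.1 z - p.1 w‖ ≤ ‖(z : ℂ) - w‖ * (max C' 1 * ‖p‖) := h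
      _ = max C' 1 * ‖p‖ * ‖(z : ℂ) - w‖ := mul_comm _ _

theorem equicontinuous_fst_of_norm_le_one (hcomp : D1Complete X) {ι : Type*}
    {p : ι → C(X, ℂ) × C(X, ℂ)} (hp : ∀ i, p i ∈ derivGraph X) (hp₁ : ∀ i, ‖p i‖ ≤ 1) :
    Equicontinuous fun i => ⇑(p i).1 := equicontinuous_of_forall_dist_le fun x => by
  obtain ⟨A, hA, hAp⟩ := exists_norm_sub_le_mul_norm_of_mem_derivGraph hcomp x
  refine ⟨A, fun i y => ?_⟩
  calc dist ((p i).1 x) ((p i).1 y) ≤ A * ‖p i‖ * dist x y := by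
        rw [dist_eq_norm]; exact hAp _ (hp i) y
    _ ≤ A * dist x y := by
        gcongr; exact mul_le_of_le_one_right hA.le (hp₁ i)

theorem apply_eq_of_mem_derivGraph [ConnectedSpace X] (hcomp : D1Complete X) {F : C(X, ℂ)}
    (hF : (F, 0) ∈ derivGraph X) (x y : X) : F x = F y := by
  set G := F - ContinuousMap.const X (F y)
  have hG : (G, 0) ∈ derivGraph X := by simpa using sub_mem hF (const_mem_derivGraph (F y))
  have hpow : ∀ x, ∃ A, ∀ (n : ℕ) v, ‖G x ^ n - G v ^ n‖ ≤ A * ‖G‖ ^ n * dist x v := fun x => by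
    obtain ⟨A, hA, hAp⟩ := exists_norm_sub_le_mul_norm_of_mem_derivGraph hcomp x
    refine ⟨A, fun n v => ?_⟩
    calc ‖G x ^ n - G v ^ n‖ = ‖(G ^ n) x - (G ^ n) v‖ := by simp
      _ ≤ A * ‖((G ^ n, 0) : C(X, ℂ) × C(X, ℂ))‖ * dist x v := hAp _ (pow_mem_derivGraph hG n) v
      _ ≤ A * ‖G‖ ^ n * dist x v := by gcongr; simpa using norm_pow_le G n
  obtain ⟨x₀, hx₀⟩ : ∃ x₀, ∀ v, ‖G v‖ ≤ ‖G x₀‖ :=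
    G.continuous.norm.exists_forall_ge (by simp)
  have hmax : ‖G x₀‖ = ‖G‖ :=
    le_antisymm (G.norm_coe_le_norm x₀) ((G.norm_le (norm_nonneg _)).2 hx₀)
  have hconst := norm_eq_of_norm_pow_sub_le G.continuous G.norm_coe_le_norm hmax hpow
  have hG0 : ‖G‖ = 0 := by rw [← hconst y]; simp [G]
  simpa [G, sub_eq_zero] using (hconst x).trans hG0

theorem exists_norm_fst_le_mul_norm_snd [ConnectedSpace X] (hcomp : D1Complete X) (z₀ : X) :
    ∃ C > 0, ∀ p ∈ derivGraph X, p.1 z₀ = 0 → ‖p.1‖ ≤ C * ‖p.2‖ := by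
  by_contra! hcon
  have hseq : ∀ n : ℕ, ∃ p ∈ derivGraph X, p.1 z₀ = 0 ∧ ‖p.1‖ = 1 ∧ ‖p.2‖ ≤ 1 / (n + 1) := by
    intro n
    obtain ⟨p, hp, hz, hlt⟩ := hcon (n + 1) (by positivity)
    have hpos : 0 < ‖p.1‖ := (by positivity : 0 ≤ ((n : ℝ) + 1) * ‖p.2‖).trans_lt hlt
    refine ⟨(‖p.1‖⁻¹ : ℂ) • p, (derivGraph X).smul_mem _ hp, by simp [hz], ?_, ?_⟩
    · simp [norm_smul, hpos.ne']
    · rw [Prod.smul_snd, norm_smul, norm_inv, Complex.norm_real, norm_norm,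
        inv_mul_le_iff₀ hpos, mul_one_div, le_div_iff₀ (by positivity)]
      linarith
  choose p hp hz hnorm₁ hnorm₂ using hseq
  have hequi := equicontinuous_fst_of_norm_le_one hcomp hp fun n => max_le (hnorm₁ n).le
    ((hnorm₂ n).trans (div_le_one_of_le₀ (by linarith [n.cast_nonneg (α := ℝ)]) (by positivity)))
  obtain ⟨H, φ, hφ, hlim₁⟩ := ContinuousMap.exists_strictMono_tendsto_of_equicontinuous
    (isCompact_closedBall (0 : ℂ) 1)
    (fun n x => by simpa [← hnorm₁ n] using (p n).1.norm_coe_le_norm x) hequi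
  have hlim₂ : Tendsto (fun k => (p (φ k)).2) atTop (𝓝 0) := by
    refine squeeze_zero_norm (fun k => (hnorm₂ (φ k)).trans ?_)
      tendsto_one_div_add_atTop_nhds_zero_nat
    gcongr
    exact hφ.le_apply
  have hH : (H, 0) ∈ derivGraph X := (isClosed_derivGraph hcomp).mem_of_tendsto
    (hlim₁.prodMk_nhds hlim₂) (Eventually.of_forall fun k => hp (φ k))
  have hHz₀ : H z₀ = 0 := tendsto_nhds_unique (((continuous_eval_const z₀).tendsto H).comp hlim₁)
    (by simp [Function.comp_def, hz])
  have hH₀ : H = 0 := ContinuousMap.ext fun x =>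
    (apply_eq_of_mem_derivGraph hcomp hH x z₀).trans hHz₀
  have hnormH : ‖H‖ = 1 := tendsto_nhds_unique ((continuous_norm.tendsto H).comp hlim₁)
    (by simp [Function.comp_def, hnorm₁])
  simp [hH₀] at hnormH

theorem exists_unifNorm_le_mul_unifNorm_deriv [ConnectedSpace X] (hcomp : D1Complete X)
    {z₀ : ℂ} (hz₀ : z₀ ∈ X) :
    ∃ C > 0, ∀ f f' : ℂ → ℂ, HasD1 X f f' → f z₀ = 0 → UnifNorm X f ≤ C * UnifNorm X f' := by
  obtain ⟨C, hC, hCp⟩ := exists_norm_fst_le_mul_norm_snd hcomp ⟨z₀, hz₀⟩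
  refine ⟨C, hC, fun f f' hf hf₀ => ?_⟩
  obtain ⟨p, hp, hp₁, hp₂⟩ := hf.exists_mem_derivGraph
  rw [unifNorm_eq_norm hp₁, unifNorm_eq_norm hp₂]
  exact hCp p hp (by rw [hp₁]; exact hf₀)

theorem exists_norm_sub_le_mul_dNorm (hcomp : D1Complete X) {z : ℂ} (hz : z ∈ X) :
    ∃ A > 0, ∀ f f' : ℂ → ℂ, HasD1 X f f' → ∀ w ∈ X,
      ‖f z - f w‖ ≤ A * DNorm X f f' * ‖z - w‖ := by
  obtain ⟨A, hA, hAp⟩ := exists_norm_sub_le_mul_norm_of_mem_derivGraph hcomp ⟨z, hz⟩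
  refine ⟨A, hA, fun f f' hf w hw => ?_⟩
  obtain ⟨p, hp, hp₁, hp₂⟩ := hf.exists_mem_derivGraph
  calc ‖f z - f w‖ ≤ A * ‖p‖ * dist (⟨z, hz⟩ : X) ⟨w, hw⟩ := by
        simpa only [hp₁] using hAp p hp ⟨w, hw⟩
    _ ≤ A * DNorm X f f' * ‖z - w‖ := by
        rw [DNorm, unifNorm_eq_norm hp₁, unifNorm_eq_norm hp₂, Subtype.dist_eq, dist_eq_norm,
          Prod.norm_def]
        gcongr
        exact max_le_add_of_nonneg (norm_nonneg _) (norm_nonneg _)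

end Complete

/-- If `X` is a connected compact plane set for which `D¹(X)` is complete and `z₀ ∈ X`,
then there is `C₁ > 0` with `|f|_X ≤ C₁|f'|_X` whenever `f ∈ D¹(X)` and `f(z₀) = 0`;
consequently there is `C₂ > 0` with `|f(z₀) − f(w)| ≤ C₂|f'|_X|z₀ − w|` for all
`f ∈ D¹(X)` and `w ∈ X`. -/
theorem stmt17 (X : Set ℂ) (hXc : IsCompact X) (hconn : IsConnected X)
    (hcomp : D1Complete X) (z₀ : ℂ) (hz₀ : z₀ ∈ X) :
    (∃ C₁ > (0:ℝ), ∀ f f' : ℂ → ℂ, HasD1 X f f' → f z₀ = 0 →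
      UnifNorm X f ≤ C₁ * UnifNorm X f') ∧
    (∃ C₂ > (0:ℝ), ∀ f f' : ℂ → ℂ, HasD1 X f f' → ∀ w ∈ X,
      ‖f z₀ - f w‖ ≤ C₂ * UnifNorm X f' * ‖z₀ - w‖) := by
  have : CompactSpace X := isCompact_iff_compactSpace.mp hXc
  have : ConnectedSpace X := Subtype.connectedSpace hconn
  obtain ⟨C₁, hC₁, hnorm⟩ := exists_unifNorm_le_mul_unifNorm_deriv hcomp hz₀
  obtain ⟨A, hA, hlip⟩ := exists_norm_sub_le_mul_dNorm hcomp hz₀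
  refine ⟨⟨C₁, hC₁, hnorm⟩, A * (C₁ + 1), by positivity, fun f f' hf w hw => ?_⟩
  have hg : HasD1 X (fun z => f z - f z₀) f' := hf.sub_const (f z₀)
  calc ‖f z₀ - f w‖ = ‖(f z₀ - f z₀) - (f w - f z₀)‖ := by ring_nf
    _ ≤ A * DNorm X (fun z => f z - f z₀) f' * ‖z₀ - w‖ := hlip _ _ hg w hw
    _ ≤ A * ((C₁ + 1) * UnifNorm X f') * ‖z₀ - w‖ := by
        gcongr
        rw [DNorm]
        linarith [hnorm _ _ hg (sub_self _)]
    _ = A * (C₁ + 1) * UnifNorm X f' * ‖z₀ - w‖ := by ring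
end
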